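/- arXiv:2407.12400 — 5 statements merged into one kernel-verified Lean document; each statement's English description precedes it below -/
import Mathlib

section
/- Let K be a simplicial complex on [m] = {1,…,m} in which every element of [m] is a vertex, let J = (j_1,…,j_m) be a tuple of positive integers with j_v ≥ 2 for at least one v, and for each v ∈ [m] choose an integer 0 ≤ s_v ≤ j_v − 1. Then the set {v^{(s_v)} : v ∈ [m], j_v ≥ 2} is a face of K(J). -/
/-- `K` is an abstract simplicial complex: its faces are nonempty finite sets,
closed under taking nonempty subsets. -/
def IsSimpComplex {A : Type*} (K : Set (Finset A)) : Prop :=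
  (∀ σ ∈ K, σ.Nonempty) ∧ ∀ σ ∈ K, ∀ τ : Finset A, τ ⊆ σ → τ.Nonempty → τ ∈ K

/-- `K` is a simplicial complex on the vertex set `V`: every face is a subset of `V`. -/
def OnVertexSet {A : Type*} (K : Set (Finset A)) (V : Set A) : Prop :=
  ∀ σ ∈ K, ∀ x ∈ σ, x ∈ V

/-- The link of a face `σ` of `K`: `lk_K(σ) = {τ ∈ K : τ ∪ σ ∈ K and τ ∩ σ = ∅}`. -/
def linkOf {A : Type*} [DecidableEq A] (K : Set (Finset A)) (σ : Finset A) :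
    Set (Finset A) :=
  {τ | τ ∈ K ∧ τ ∪ σ ∈ K ∧ τ ∩ σ = ∅}

/-- The star of a face `σ` of `K`: `st_K(σ) = {τ ∈ K : τ ∪ σ ∈ K}`. -/
def starOf {A : Type*} [DecidableEq A] (K : Set (Finset A)) (σ : Finset A) :
    Set (Finset A) :=
  {τ | τ ∈ K ∧ τ ∪ σ ∈ K}

/-- The join of two simplicial complexes: the nonempty sets `σ ∪ τ` with
`σ ∈ K ∪ {∅}` and `τ ∈ L ∪ {∅}`. -/
def joinC {A : Type*} [DecidableEq A] (K L : Set (Finset A)) : Set (Finset A) :=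
  {ρ | ρ.Nonempty ∧ ∃ σ τ : Finset A, (σ ∈ K ∨ σ = ∅) ∧ (τ ∈ L ∨ τ = ∅) ∧ ρ = σ ∪ τ}

/-- The wedge of `K` at the vertex `v`, introducing the new vertex `v'`:
`wed_v(K) = (I ∗ lk_K(v)) ∪ (∂I ∗ K₋ᵥ)` where `I` is the full complex on `{v, v'}`,
`∂I` the complex with faces `{v}, {v'}`, and `K₋ᵥ = {σ ∈ K : v ∉ σ}`. -/
def wed {A : Type*} [DecidableEq A] (K : Set (Finset A)) (v v' : A) : Set (Finset A) :=
  joinC ({{v}, {v'}, {v, v'}} : Set (Finset A)) (linkOf K {v}) ∪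
    joinC ({{v}, {v'}} : Set (Finset A)) {σ | σ ∈ K ∧ v ∉ σ}

/-- The boundary complex `∂σ` of a finite set `σ`: all nonempty proper subsets of `σ`. -/
def bdry {A : Type*} (σ : Finset A) : Set (Finset A) :=
  {τ | τ ⊂ σ ∧ τ.Nonempty}

/-- The stellar subdivision of `K` at the face `σ`, with new vertex `w`:
`ss_σ(K) = (K \ st_K(σ)) ∪ ({w} ∗ ∂σ ∗ lk_K(σ))`. -/
def stellar {A : Type*} [DecidableEq A] (K : Set (Finset A)) (σ : Finset A) (w : A) :
    Set (Finset A) :=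
  (K \ starOf K σ) ∪ joinC ({{w}} : Set (Finset A)) (joinC (bdry σ) (linkOf K σ))

/-- `F` is a facet (a face maximal under inclusion) of `K`. -/
def IsFacetOf {A : Type*} (K : Set (Finset A)) (F : Finset A) : Prop :=
  F ∈ K ∧ ∀ G ∈ K, F ⊆ G → F = G

/-- A minimal non-face of `K` with respect to the vertex set `V`: a finite subset
`τ ⊆ V` with `τ ∉ K` such that every nonempty proper subset of `τ` is a face of `K`. -/
def IsMinNonFace {A : Type*} (K : Set (Finset A)) (V : Set A) (τ : Finset A) : Prop :=
  (∀ x ∈ τ, x ∈ V) ∧ τ ∉ K ∧ ∀ ρ : Finset A, ρ ⊂ τ → ρ.Nonempty → ρ ∈ K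

/-- Perform successive wedge operations at the vertex `(v, 0)`; the `t`-th introduces
the new vertex `(v, t)`.  Here the pair `(v, t)` encodes the vertex copy `v⁽ᵗ⁾`,
identifying `v⁽⁰⁾` with `v`. -/
def wedIter (K : Set (Finset (ℕ × ℕ))) (v : ℕ) : ℕ → Set (Finset (ℕ × ℕ))
  | 0 => K
  | t + 1 => wed (wedIter K v t) (v, 0) (v, t + 1)

/-- The `J`-construction `K(J)` of a simplicial complex `K` on `[m] = {1, …, m}`
(the vertex `v` being encoded as the pair `(v, 0)`): for each `v ∈ [m]`, perform
`j v - 1` successive wedge operations at `v`, the `t`-th of which introduces the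
new vertex `v⁽ᵗ⁾ = (v, t)`. -/
def KJ (K : Set (Finset (ℕ × ℕ))) (m : ℕ) (j : ℕ → ℕ) : Set (Finset (ℕ × ℕ)) :=
  (List.range m).foldl (fun L v => wedIter L (v + 1) (j (v + 1) - 1)) K

/-- All nonempty subsets of `F` are faces of `L`. -/
def FullyIn {A : Type*} (F : Finset A) (L : Set (Finset A)) : Prop :=
  ∀ G : Finset A, G ⊆ F → G.Nonempty → G ∈ L

lemma fullyIn_persist {A : Type*} [DecidableEq A] {F : Finset A} {L : Set (Finset A)}
    (hF : FullyIn F L) {v : A} (hv : v ∉ F) (w : A) : FullyIn F (wed L v w) := by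
  intro G hG hGne
  exact Or.inr ⟨hGne, ∅, G, Or.inr rfl,
    Or.inl ⟨hF G hG hGne, fun h => hv (hG h)⟩, by simp⟩

lemma fullyIn_addx {A : Type*} [DecidableEq A] {F : Finset A} {L : Set (Finset A)}
    {v w x : A} (hF : FullyIn F L) (hv : v ∉ F) (hx : x = v ∨ x = w) :
    FullyIn (insert x F) (wed L v w) := by
  intro G hG hGne
  by_cases hxG : x ∈ G
  · have hsub : G.erase x ⊆ F := by
      intro y hy
      have hyx := Finset.ne_of_mem_erase hy
      have := hG (Finset.mem_of_mem_erase hy)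
      rcases Finset.mem_insert.mp this with h | h
      · exact absurd h hyx
      · exact h
    have hGeq : G = {x} ∪ G.erase x := by
      rw [← Finset.insert_eq, Finset.insert_erase hxG]
    refine Or.inr ⟨hGne, {x}, G.erase x, Or.inl ?_, ?_, hGeq⟩
    · rcases hx with h | h <;> simp [h]
    · by_cases he : (G.erase x).Nonempty
      · exact Or.inl ⟨hF _ hsub he, fun h => hv (hsub h)⟩
      · exact Or.inr (Finset.not_nonempty_iff_eq_empty.mp he)
  · have hsub : G ⊆ F := by
      intro y hy
      rcases Finset.mem_insert.mp (hG hy) with h | h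
      · exact absurd (h ▸ hy) hxG
      · exact h
    exact Or.inr ⟨hGne, ∅, G, Or.inr rfl,
      Or.inl ⟨hF G hsub hGne, fun h => hv (hsub h)⟩, by simp⟩

lemma fullyIn_keepv {A : Type*} [DecidableEq A] {F : Finset A} {L : Set (Finset A)}
    {v : A} (hF : FullyIn F L) (hv : v ∈ F) (w : A) : FullyIn F (wed L v w) := by
  intro G hG hGne
  by_cases hvG : v ∈ G
  · have hGeq : G = {v} ∪ G.erase v := by
      rw [← Finset.insert_eq, Finset.insert_erase hvG]
    refine Or.inl ⟨hGne, {v}, G.erase v, Or.inl (by simp), ?_, hGeq⟩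
    by_cases he : (G.erase v).Nonempty
    · refine Or.inl ⟨hF _ ((Finset.erase_subset v G).trans hG) he, ?_, ?_⟩
      · have : G.erase v ∪ {v} = G := by
          rw [Finset.union_comm, ← Finset.insert_eq, Finset.insert_erase hvG]
        rw [this]; exact hF G hG hGne
      · ext y; simp only [Finset.mem_inter, Finset.mem_erase, Finset.mem_singleton,
          Finset.notMem_empty, iff_false]
        rintro ⟨⟨hne, _⟩, rfl⟩; exact hne rfl
    · exact Or.inr (Finset.not_nonempty_iff_eq_empty.mp he)
  · exact Or.inr ⟨hGne, ∅, G, Or.inr rfl,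
      Or.inl ⟨hF G hG hGne, hvG⟩, by simp⟩

lemma fullyIn_wedIter_step {L : Set (Finset (ℕ × ℕ))} {F : Finset (ℕ × ℕ)} {v : ℕ}
    (hF : FullyIn F L) (hfresh : ∀ t, ((v, t) : ℕ × ℕ) ∉ F)
    {s n : ℕ} (hn : 1 ≤ n) (hs : s ≤ n) :
    FullyIn (insert ((v, s) : ℕ × ℕ) F) (wedIter L v n) := by
  have hM : 1 ≤ max s 1 := le_max_right _ _
  have aux1 : ∀ t, t < max s 1 → FullyIn F (wedIter L v t) := by
    intro t
    induction t with
    | zero => intro _; exact hF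
    | succ t ih =>
      intro h
      exact fullyIn_persist (ih (by omega)) (hfresh 0) _
  have aux2 : ∀ t, FullyIn (insert ((v, s) : ℕ × ℕ) F) (wedIter L v (max s 1 + t)) := by
    intro t
    induction t with
    | zero =>
      obtain ⟨M, hMeq⟩ : ∃ M, max s 1 = M + 1 :=
        ⟨max s 1 - 1, (Nat.succ_pred_eq_of_pos hM).symm⟩
      rw [Nat.add_zero, hMeq]
      refine fullyIn_addx (aux1 M (by omega)) (hfresh 0) ?_
      rcases Nat.eq_zero_or_pos s with h | h
      · exact Or.inl (by simp [h])
      · have : M + 1 = s := by omega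
        exact Or.inr (by rw [this])
    | succ t ih =>
      have heq : max s 1 + (t + 1) = (max s 1 + t) + 1 := rfl
      rw [heq]
      by_cases h0 : s = 0
      · exact fullyIn_keepv ih (by simp [h0]) _
      · refine fullyIn_persist ih ?_ _
        simp only [Finset.mem_insert, Prod.mk.injEq]
        rintro (⟨_, h⟩ | h)
        · exact h0 h.symm
        · exact hfresh 0 h
  have : n = max s 1 + (n - max s 1) := by omega
  rw [this]
  exact aux2 _

theorem stmt1 (m : ℕ) (K : Set (Finset (ℕ × ℕ)))
    (hK : IsSimpComplex K)
    (hKV : OnVertexSet K {p : ℕ × ℕ | p.1 ∈ Finset.Icc 1 m ∧ p.2 = 0})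
    (hvert : ∀ v ∈ Finset.Icc 1 m, ({(v, 0)} : Finset (ℕ × ℕ)) ∈ K)
    (j : ℕ → ℕ) (hj : ∀ v ∈ Finset.Icc 1 m, 1 ≤ j v)
    (hex : ∃ v ∈ Finset.Icc 1 m, 2 ≤ j v)
    (s : ℕ → ℕ) (hs : ∀ v ∈ Finset.Icc 1 m, s v ≤ j v - 1) :
    ((Finset.Icc 1 m).filter fun v => 2 ≤ j v).image (fun v => ((v, s v) : ℕ × ℕ)) ∈
      KJ K m j := by
  have main : ∀ k, k ≤ m →
      FullyIn (((Finset.Icc 1 k).filter fun v => 2 ≤ j v).image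
          (fun v => ((v, s v) : ℕ × ℕ)))
        (List.foldl (fun L v => wedIter L (v + 1) (j (v + 1) - 1)) K (List.range k)) := by
    intro k
    induction k with
    | zero =>
      intro _ G hG hGne
      exfalso
      have : G = ∅ := Finset.subset_empty.mp (by simpa using hG)
      simp [this] at hGne
    | succ k ih =>
      intro hk
      have hk' : k ≤ m := Nat.le_of_succ_le hk
      have hkm : k + 1 ∈ Finset.Icc 1 m := by simp; omega
      rw [List.range_succ, List.foldl_append, List.foldl_cons, List.foldl_nil]
      have hIcc : Finset.Icc 1 (k + 1) = insert (k + 1) (Finset.Icc 1 k) := by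
        ext x; simp only [Finset.mem_Icc, Finset.mem_insert]; omega
      by_cases hj2 : 2 ≤ j (k + 1)
      · have himg : ((Finset.Icc 1 (k + 1)).filter fun v => 2 ≤ j v).image
            (fun v => ((v, s v) : ℕ × ℕ)) =
            insert ((k + 1, s (k + 1)) : ℕ × ℕ)
              (((Finset.Icc 1 k).filter fun v => 2 ≤ j v).image
                (fun v => ((v, s v) : ℕ × ℕ))) := by
          rw [hIcc, Finset.filter_insert, if_pos hj2, Finset.image_insert]
        rw [himg]
        refine fullyIn_wedIter_step (ih hk') ?_ (by omega) ?_
        · intro t ht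
          simp only [Finset.mem_image, Finset.mem_filter, Finset.mem_Icc] at ht
          obtain ⟨u, ⟨⟨_, hu⟩, _⟩, heq⟩ := ht
          have : u = k + 1 := (Prod.mk.injEq _ _ _ _).mp heq |>.1
          omega
        · have := hs (k + 1) hkm
          omega
      · have himg : ((Finset.Icc 1 (k + 1)).filter fun v => 2 ≤ j v) =
            ((Finset.Icc 1 k).filter fun v => 2 ≤ j v) := by
          rw [hIcc, Finset.filter_insert, if_neg hj2]
        rw [himg]
        have h0 : j (k + 1) - 1 = 0 := by omega
        rw [h0]
        exact ih hk'
  refine main m le_rfl _ (subset_refl _) ?_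
  obtain ⟨v, hv, h2⟩ := hex
  exact ⟨(v, s v), Finset.mem_image_of_mem _ (Finset.mem_filter.mpr ⟨hv, h2⟩)⟩
end

section
/- Let K be a simplicial complex on a vertex set V in which every element of V is a vertex, let v ∈ V, and let v′ ∉ V be a new vertex. Then a set τ is a minimal non-face of wed_v(K) if and only if either τ is a minimal non-face of K with v ∉ τ, or τ = σ ∪ {v′} for some minimal non-face σ of K with v ∈ σ. -/
lemma mem_wed_iff {A : Type*} [DecidableEq A] {K : Set (Finset A)} {v v' : A}
    (hK : IsSimpComplex K) (hvK : ({v} : Finset A) ∈ K)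
    (hv'K : ∀ σ ∈ K, v' ∉ σ) (hvv' : v ≠ v') (τ : Finset A) :
    τ ∈ wed K v v' ↔ τ.Nonempty ∧
      ((v ∈ τ ∧ v' ∈ τ ∧ τ.erase v' ∈ K) ∨
       (v ∈ τ ∧ v' ∉ τ ∧ (τ = {v} ∨ τ.erase v ∈ K)) ∨
       (v ∉ τ ∧ v' ∈ τ ∧ (τ = {v'} ∨ τ.erase v' ∈ K)) ∨
       (v ∉ τ ∧ v' ∉ τ ∧ τ ∈ K)) := by
  constructor
  · rintro (⟨hne, σ0, π, hσ0, hπ, rfl⟩ | ⟨hne, σ0, π, hσ0, hπ, rfl⟩)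
    · -- first join
      have hπv : v ∉ π := by
        rcases hπ with ⟨_, _, hd⟩ | rfl
        · intro h; have : v ∈ π ∩ {v} := Finset.mem_inter.2 ⟨h, Finset.mem_singleton_self v⟩
          simp [hd] at this
        · simp
      have hπv' : v' ∉ π := by
        rcases hπ with ⟨hπK, _, _⟩ | rfl
        · exact hv'K π hπK
        · simp
      simp only [Set.mem_insert_iff, Set.mem_singleton_iff] at hσ0
      rcases hσ0 with (rfl | rfl | rfl) | rfl
      · refine ⟨hne, Or.inr <| Or.inl ⟨by simp, by simp [hvv'.symm, hπv'], ?_⟩⟩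
        have he : ({v} ∪ π).erase v = π := by
          rw [← Finset.insert_eq, Finset.erase_insert hπv]
        rcases hπ with ⟨hπK, _, _⟩ | rfl
        · exact Or.inr (by rw [he]; exact hπK)
        · exact Or.inl (by simp)
      · refine ⟨hne, Or.inr <| Or.inr <| Or.inl ⟨by simp [hvv', hπv], by simp, ?_⟩⟩
        have he : ({v'} ∪ π).erase v' = π := by
          rw [← Finset.insert_eq, Finset.erase_insert hπv']
        rcases hπ with ⟨hπK, _, _⟩ | rfl
        · exact Or.inr (by rw [he]; exact hπK)
        · exact Or.inl (by simp)
      · refine ⟨hne, Or.inl ⟨by simp, by simp, ?_⟩⟩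
        have he : ({v, v'} ∪ π).erase v' = insert v π := by
          have : ({v, v'} : Finset A) ∪ π = insert v' (insert v π) := by
            ext x; simp [Finset.insert_union]; tauto
          rw [this, Finset.erase_insert (by simp [hvv'.symm, hπv'])]
        rw [he]
        rcases hπ with ⟨_, hπuK, _⟩ | rfl
        · rwa [Finset.union_comm, ← Finset.insert_eq] at hπuK
        · simpa using hvK
      · simp only [Finset.empty_union] at hne ⊢
        rcases hπ with ⟨hπK, _, _⟩ | rfl
        · exact ⟨hne, Or.inr <| Or.inr <| Or.inr ⟨hπv, hπv', hπK⟩⟩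
        · simp at hne
    · -- second join
      have hπv : v ∉ π := by
        rcases hπ with ⟨_, h⟩ | rfl
        · exact h
        · simp
      have hπv' : v' ∉ π := by
        rcases hπ with ⟨hπK, _⟩ | rfl
        · exact hv'K π hπK
        · simp
      simp only [Set.mem_insert_iff, Set.mem_singleton_iff] at hσ0
      rcases hσ0 with (rfl | rfl) | rfl
      · refine ⟨hne, Or.inr <| Or.inl ⟨by simp, by simp [hvv'.symm, hπv'], ?_⟩⟩
        have he : ({v} ∪ π).erase v = π := by
          rw [← Finset.insert_eq, Finset.erase_insert hπv]
        rcases hπ with ⟨hπK, _⟩ | rfl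
        · exact Or.inr (by rw [he]; exact hπK)
        · exact Or.inl (by simp)
      · refine ⟨hne, Or.inr <| Or.inr <| Or.inl ⟨by simp [hvv', hπv], by simp, ?_⟩⟩
        have he : ({v'} ∪ π).erase v' = π := by
          rw [← Finset.insert_eq, Finset.erase_insert hπv']
        rcases hπ with ⟨hπK, _⟩ | rfl
        · exact Or.inr (by rw [he]; exact hπK)
        · exact Or.inl (by simp)
      · simp only [Finset.empty_union] at hne ⊢
        rcases hπ with ⟨hπK, _⟩ | rfl
        · exact ⟨hne, Or.inr <| Or.inr <| Or.inr ⟨hπv, hπv', hπK⟩⟩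
        · simp at hne
  · rintro ⟨hne, ⟨hv1, hv'1, hEK⟩ | ⟨hv1, hv'1, hC⟩ | ⟨hv1, hv'1, hC⟩ | ⟨hv1, hv'1, hτK⟩⟩
    · -- both v, v' ∈ τ
      left
      set π := (τ.erase v').erase v with hπdef
      have hπv : v ∉ π := Finset.notMem_erase _ _
      have hπv' : v' ∉ π := fun h => Finset.notMem_erase v' τ (Finset.mem_of_mem_erase h)
      have hτeq : τ = {v, v'} ∪ π := by
        have h1 : insert v π = τ.erase v' := Finset.insert_erase (Finset.mem_erase.2 ⟨hvv', hv1⟩)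
        have h2 : insert v' (insert v π) = τ := by rw [h1]; exact Finset.insert_erase hv'1
        rw [← h2]
        ext x; simp [Finset.insert_union]; tauto
      by_cases hπe : π = ∅
      · exact ⟨hne, {v, v'}, ∅, Or.inl (by simp), Or.inr rfl, by rw [hτeq, hπe]⟩
      · refine ⟨hne, {v, v'}, π, Or.inl (by simp), Or.inl ⟨?_, ?_, ?_⟩, hτeq⟩
        · exact hK.2 _ hEK π (by rw [hπdef]; exact Finset.erase_subset _ _)
            (Finset.nonempty_of_ne_empty hπe)
        · have : π ∪ {v} = τ.erase v' := by
            rw [Finset.union_comm, ← Finset.insert_eq,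
              Finset.insert_erase (Finset.mem_erase.2 ⟨hvv', hv1⟩)]
          rwa [this]
        · simp [Finset.eq_empty_iff_forall_notMem, hπv]
    · -- v ∈ τ, v' ∉ τ
      right
      rcases hC with rfl | hC
      · exact ⟨hne, {v}, ∅, Or.inl (by simp), Or.inr rfl, by simp⟩
      · refine ⟨hne, {v}, τ.erase v, Or.inl (by simp), ?_, ?_⟩
        · by_cases he : τ.erase v = ∅
          · exact Or.inr he
          · exact Or.inl ⟨hC, Finset.notMem_erase _ _⟩
        · rw [← Finset.insert_eq, Finset.insert_erase hv1]
    · -- v' ∈ τ, v ∉ τ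
      right
      rcases hC with rfl | hC
      · exact ⟨hne, {v'}, ∅, Or.inl (by simp), Or.inr rfl, by simp⟩
      · refine ⟨hne, {v'}, τ.erase v', Or.inl (by simp), ?_, ?_⟩
        · by_cases he : τ.erase v' = ∅
          · exact Or.inr he
          · exact Or.inl ⟨hC, fun h => hv1 (Finset.mem_of_mem_erase h)⟩
        · rw [← Finset.insert_eq, Finset.insert_erase hv'1]
    · exact Or.inr ⟨hne, ∅, τ, Or.inr rfl, Or.inl ⟨hτK, hv1⟩, by simp⟩

theorem stmt4 {A : Type*} [DecidableEq A] (V : Set A) (K : Set (Finset A))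
    (hK : IsSimpComplex K) (hKV : OnVertexSet K V)
    (hfull : ∀ x ∈ V, ({x} : Finset A) ∈ K)
    (v : A) (hv : v ∈ V) (v' : A) (hv' : v' ∉ V) :
    ∀ τ : Finset A, IsMinNonFace (wed K v v') (V ∪ {v'}) τ ↔
      (IsMinNonFace K V τ ∧ v ∉ τ) ∨
        ∃ σ : Finset A, IsMinNonFace K V σ ∧ v ∈ σ ∧ τ = σ ∪ {v'} := by
  intro τ
  have hvK : ({v} : Finset A) ∈ K := hfull v hv
  have hvv' : v ≠ v' := fun h => hv' (h ▸ hv)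
  have hv'K : ∀ σ ∈ K, v' ∉ σ := fun σ hσ h => hv' (hKV σ hσ v' h)
  have hmem := mem_wed_iff (K := K) (v := v) (v' := v') hK hvK hv'K hvv'
  have hW4 : ∀ ρ, ρ ∈ wed K v v' → v ∉ ρ → v' ∉ ρ → ρ ∈ K := by
    intro ρ hρ h1 h2
    rcases (hmem ρ).1 hρ with ⟨_, ⟨h, _, _⟩ | ⟨h, _, _⟩ | ⟨_, h, _⟩ | ⟨_, _, h⟩⟩
    · exact absurd h h1
    · exact absurd h h1
    · exact absurd h h2
    · exact h
  have hWboth : ∀ ρ, ρ ∈ wed K v v' → v ∈ ρ → v' ∈ ρ → ρ.erase v' ∈ K := by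
    intro ρ hρ h1 h2
    rcases (hmem ρ).1 hρ with ⟨_, ⟨_, _, h⟩ | ⟨_, h, _⟩ | ⟨h, _, _⟩ | ⟨h, _, _⟩⟩
    · exact h
    · exact absurd h2 h
    · exact absurd h1 h
    · exact absurd h1 h
  have hK4 : ∀ ρ ∈ K, v ∉ ρ → ρ ∈ wed K v v' :=
    fun ρ hρ h1 => (hmem ρ).2 ⟨hK.1 ρ hρ, Or.inr (Or.inr (Or.inr ⟨h1, hv'K ρ hρ, hρ⟩))⟩
  have hKw : ∀ ρ ∈ K, ρ ∈ wed K v v' := by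
    intro ρ hρ
    by_cases h1 : v ∈ ρ
    · refine (hmem ρ).2 ⟨hK.1 ρ hρ, Or.inr (Or.inl ⟨h1, hv'K ρ hρ, ?_⟩)⟩
      by_cases he : ρ.erase v = ∅
      · left
        rcases (Finset.erase_eq_empty_iff ρ v).1 he with rfl | h
        · exact absurd h1 (by simp)
        · exact h
      · exact Or.inr (hK.2 ρ hρ _ (Finset.erase_subset _ _) (Finset.nonempty_of_ne_empty he))
    · exact hK4 ρ hρ h1
  constructor
  · rintro ⟨hτV, hτw, hτmin⟩
    by_cases hv'τ : v' ∈ τ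
    · by_cases hvτ : v ∈ τ
      · right
        refine ⟨τ.erase v', ⟨?_, ?_, ?_⟩, Finset.mem_erase.2 ⟨hvv', hvτ⟩, ?_⟩
        · intro x hx
          rcases Finset.mem_erase.1 hx with ⟨hxne, hxτ⟩
          rcases hτV x hxτ with h | h
          · exact h
          · exact absurd (by simpa using h) hxne
        · intro hσK
          exact hτw ((hmem τ).2 ⟨⟨v', hv'τ⟩, Or.inl ⟨hvτ, hv'τ, hσK⟩⟩)
        · intro π hπss hπne
          have hπv' : v' ∉ π := fun h => Finset.notMem_erase v' τ (hπss.1 h)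
          by_cases hvπ : v ∈ π
          · obtain ⟨x, hxσ, hxπ⟩ := Finset.exists_of_ssubset hπss
            have hss : insert v' π ⊂ τ := by
              rw [Finset.ssubset_def]
              constructor
              · intro y hy
                rcases Finset.mem_insert.1 hy with rfl | hy
                · exact hv'τ
                · exact Finset.mem_of_mem_erase (hπss.1 hy)
              · intro hsub
                have hxτ' : x ∈ insert v' π := hsub (Finset.mem_of_mem_erase hxσ)
                rcases Finset.mem_insert.1 hxτ' with rfl | h
                · exact (Finset.mem_erase.1 hxσ).1 rfl
                · exact hxπ h
            have h1 := hWboth (insert v' π) (hτmin _ hss ⟨v', Finset.mem_insert_self _ _⟩)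
              (Finset.mem_insert_of_mem hvπ) (Finset.mem_insert_self _ _)
            rwa [Finset.erase_insert hπv'] at h1
          · have hss : π ⊂ τ := hπss.trans (Finset.erase_ssubset hv'τ)
            exact hW4 π (hτmin π hss hπne) hvπ hπv'
        · exact (Finset.insert_erase hv'τ).symm.trans (by rw [Finset.union_comm, ← Finset.insert_eq])
      · exfalso
        apply hτw
        by_cases he : τ.erase v' = ∅
        · rcases (Finset.erase_eq_empty_iff τ v').1 he with rfl | h
          · exact absurd hv'τ (by simp)
          · exact (hmem τ).2 ⟨⟨v', hv'τ⟩, Or.inr <| Or.inr <| Or.inl ⟨hvτ, hv'τ, Or.inl h⟩⟩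
        · have hρ : τ.erase v' ∈ K :=
            hW4 _ (hτmin _ (Finset.erase_ssubset hv'τ) (Finset.nonempty_of_ne_empty he))
              (fun h => hvτ (Finset.mem_of_mem_erase h)) (Finset.notMem_erase _ _)
          exact (hmem τ).2 ⟨⟨v', hv'τ⟩, Or.inr <| Or.inr <| Or.inl ⟨hvτ, hv'τ, Or.inr hρ⟩⟩
    · by_cases hvτ : v ∈ τ
      · exfalso
        apply hτw
        by_cases he : τ.erase v = ∅
        · rcases (Finset.erase_eq_empty_iff τ v).1 he with rfl | h
          · exact absurd hvτ (by simp)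
          · exact (hmem τ).2 ⟨⟨v, hvτ⟩, Or.inr <| Or.inl ⟨hvτ, hv'τ, Or.inl h⟩⟩
        · have hρ : τ.erase v ∈ K :=
            hW4 _ (hτmin _ (Finset.erase_ssubset hvτ) (Finset.nonempty_of_ne_empty he))
              (Finset.notMem_erase _ _) (fun h => hv'τ (Finset.mem_of_mem_erase h))
          exact (hmem τ).2 ⟨⟨v, hvτ⟩, Or.inr <| Or.inl ⟨hvτ, hv'τ, Or.inr hρ⟩⟩
      · left
        refine ⟨⟨?_, fun h => hτw (hKw τ h), fun ρ hss hne =>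
          hW4 ρ (hτmin ρ hss hne) (fun h => hvτ (hss.1 h)) (fun h => hv'τ (hss.1 h))⟩, hvτ⟩
        intro x hx
        rcases hτV x hx with h | h
        · exact h
        · exact absurd (by simpa using h : x = v') (fun hh => hv'τ (hh ▸ hx))
  · rintro (⟨⟨hσV, hσK, hσmin⟩, hvτ⟩ | ⟨σ, ⟨hσV, hσK, hσmin⟩, hvσ, rfl⟩)
    · have hv'τ : v' ∉ τ := fun h => hv' (hσV v' h)
      exact ⟨fun x hx => Or.inl (hσV x hx), fun hw => hσK (hW4 τ hw hvτ hv'τ),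
        fun ρ hss hne => hKw ρ (hσmin ρ hss hne)⟩
    · have hv'σ : v' ∉ σ := fun h => hv' (hσV v' h)
      have hins : σ ∪ {v'} = insert v' σ := by rw [Finset.union_comm, ← Finset.insert_eq]
      have hσne : σ.Nonempty := ⟨v, hvσ⟩
      have herne : (σ.erase v).Nonempty := by
        rcases Finset.eq_empty_or_nonempty (σ.erase v) with he | h
        · rcases (Finset.erase_eq_empty_iff σ v).1 he with rfl | h
          · exact absurd hvσ (by simp)
          · exact absurd (h ▸ hvK) hσK
        · exact h
      have hσw : σ ∈ wed K v v' :=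
        (hmem σ).2 ⟨hσne, Or.inr <| Or.inl ⟨hvσ, hv'σ,
          Or.inr (hσmin _ (Finset.erase_ssubset hvσ) herne)⟩⟩
      refine ⟨?_, ?_, ?_⟩
      · intro x hx
        rcases Finset.mem_union.1 hx with h | h
        · exact Or.inl (hσV x h)
        · exact Or.inr (by simpa using h)
      · intro hw
        have h1 := hWboth _ hw (Finset.mem_union_left _ hvσ)
          (Finset.mem_union_right _ (Finset.mem_singleton_self _))
        rw [hins, Finset.erase_insert hv'σ] at h1
        exact hσK h1
      · intro π hss hne
        by_cases hv'π : v' ∈ π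
        · have hsub : π.erase v' ⊆ σ := by
            intro x hx
            rcases Finset.mem_erase.1 hx with ⟨hxne, hxπ⟩
            rcases Finset.mem_union.1 (hss.1 hxπ) with h | h
            · exact h
            · exact absurd (by simpa using h) hxne
          have hne' : π.erase v' ≠ σ := by
            intro h
            have : π = σ ∪ {v'} := by
              rw [hins, ← h, Finset.insert_erase hv'π]
            exact hss.2 (this ▸ Finset.Subset.refl _)
          have hss' : π.erase v' ⊂ σ := lt_of_le_of_ne hsub hne'
          by_cases hvπ : v ∈ π
          · refine (hmem π).2 ⟨hne, Or.inl ⟨hvπ, hv'π, hσmin _ hss' ⟨v, Finset.mem_erase.2 ⟨hvv', hvπ⟩⟩⟩⟩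
          · by_cases he : π.erase v' = ∅
            · refine (hmem π).2 ⟨hne, Or.inr <| Or.inr <| Or.inl ⟨hvπ, hv'π, Or.inl ?_⟩⟩
              rcases (Finset.erase_eq_empty_iff π v').1 he with rfl | h
              · exact absurd hv'π (by simp)
              · exact h
            · exact (hmem π).2 ⟨hne, Or.inr <| Or.inr <| Or.inl ⟨hvπ, hv'π,
                Or.inr (hσmin _ hss' (Finset.nonempty_of_ne_empty he))⟩⟩
        · have hsub : π ⊆ σ := by
            intro x hx
            rcases Finset.mem_union.1 (hss.1 hx) with h | h
            · exact h
            · exact absurd (by simpa using h : x = v') (fun hh => hv'π (hh ▸ hx))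
          by_cases hπσ : π = σ
          · exact hπσ ▸ hσw
          · exact hKw π (hσmin π (lt_of_le_of_ne hsub hπσ) hne)
end

section
/- Let K be a simplicial complex on a finite vertex set V, let σ be a face of K with |σ| ≥ 2, and let v_σ ∉ V be a new vertex. Then the facets of ss_σ(K) are exactly: (i) the facets F of K with σ ⊄ F, and (ii) the sets (F \ {x}) ∪ {v_σ} where F is a facet of K with σ ⊆ F and x ∈ σ. -/
open Finset

section

variable {A : Type*}

theorem OnVertexSet.finite {K : Set (Finset A)} {V : Set A} (hKV : OnVertexSet K V)
    (hV : V.Finite) : K.Finite :=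
  (hV.toFinset.powerset : Set (Finset A)).toFinite.subset fun G hG =>
    mem_powerset.2 fun x hx => hV.mem_toFinset.2 (hKV G hG x hx)

theorem exists_isFacetOf_superset {K : Set (Finset A)} (hK : K.Finite) {τ : Finset A}
    (hτ : τ ∈ K) : ∃ F, IsFacetOf K F ∧ τ ⊆ F := by
  obtain ⟨F, hτF, hF⟩ := hK.exists_le_maximal hτ
  exact ⟨F, ⟨hF.1, fun G hG hFG => le_antisymm hFG (hF.2 hG hFG)⟩, hτF⟩

variable [DecidableEq A]

theorem mem_joinC_singleton_iff {L : Set (Finset A)} {w : A} (hwL : ∀ ρ ∈ L, w ∉ ρ)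
    (τ : Finset A) : τ ∈ joinC {{w}} L ↔ τ.Nonempty ∧ (τ.erase w ∈ L ∨ τ.erase w = ∅) := by
  constructor
  · rintro ⟨hτ, s, ρ, hs, hρ, rfl⟩
    have hwρ : w ∉ ρ := by
      rcases hρ with hρ | rfl
      exacts [hwL ρ hρ, notMem_empty w]
    have hsw : s.erase w = ∅ := by
      rcases hs with rfl | rfl <;> simp
    rw [erase_union_distrib, hsw, empty_union, erase_eq_of_notMem hwρ]
    exact ⟨hτ, hρ⟩
  · rintro ⟨hτ, hρ⟩
    by_cases hw : w ∈ τ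
    · exact ⟨hτ, {w}, τ.erase w, Or.inl rfl, hρ, by rw [← insert_eq, insert_erase hw]⟩
    · exact ⟨hτ, ∅, τ.erase w, Or.inr rfl, hρ, by rw [empty_union, erase_eq_of_notMem hw]⟩

theorem mem_joinC_bdry_linkOf_or_eq_empty_iff {K : Set (Finset A)} (hK : IsSimpComplex K)
    {σ : Finset A} (hσ : σ ∈ K) (ρ : Finset A) :
    ρ ∈ joinC (bdry σ) (linkOf K σ) ∨ ρ = ∅ ↔ ¬ σ ⊆ ρ ∧ ρ ∪ σ ∈ K := by
  have hσne := hK.1 σ hσ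
  constructor
  · rintro (⟨-, α, β, hα, hβ, rfl⟩ | rfl)
    · have hασ : α ⊂ σ := by
        rcases hα with hα | rfl
        exacts [hα.1, hσne.empty_ssubset]
      have hβσ : Disjoint β σ ∧ β ∪ σ ∈ K := by
        rcases hβ with hβ | rfl
        · exact ⟨disjoint_iff_inter_eq_empty.2 hβ.2.2, hβ.2.1⟩
        · simpa using hσ
      refine ⟨fun hσαβ => not_subset_of_ssubset hασ fun a ha => ?_, ?_⟩
      · rcases mem_union.1 (hσαβ ha) with h | h
        exacts [h, absurd ha (disjoint_left.1 hβσ.1 h)]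
      · rw [union_comm α β, union_assoc, union_eq_right.2 hασ.subset]
        exact hβσ.2
    · exact ⟨fun h => hσne.ne_empty (subset_empty.1 h), by simpa using hσ⟩
  · rintro ⟨hσρ, hρσ⟩
    rcases ρ.eq_empty_or_nonempty with rfl | hρ
    · exact Or.inr rfl
    refine Or.inl ⟨hρ, ρ ∩ σ, ρ \ σ, ?_, ?_, (sup_inf_sdiff ρ σ).symm⟩
    · rcases (ρ ∩ σ).eq_empty_or_nonempty with h | h
      · exact Or.inr h
      · exact Or.inl ⟨Finset.ssubset_iff_subset_ne.2 ⟨inter_subset_right,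
          fun h' => hσρ (h' ▸ inter_subset_left)⟩, h⟩
    · rcases (ρ \ σ).eq_empty_or_nonempty with h | h
      · exact Or.inr h
      · refine Or.inl ⟨hK.2 _ hρσ _ (sdiff_subset.trans subset_union_left) h, ?_,
          sdiff_inter_self σ ρ⟩
        rwa [sdiff_union_self_eq_union]

variable {K : Set (Finset A)} {σ : Finset A} {w : A}

theorem mem_stellar_iff (hK : IsSimpComplex K) (hσ : σ ∈ K) (hwK : ∀ G ∈ K, w ∉ G)
    (τ : Finset A) : τ ∈ stellar K σ w ↔
      (τ ∈ K ∧ τ ∪ σ ∉ K) ∨ (τ.Nonempty ∧ ¬ σ ⊆ τ.erase w ∧ τ.erase w ∪ σ ∈ K) := by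
  have hwJ : ∀ ρ ∈ joinC (bdry σ) (linkOf K σ), w ∉ ρ := fun ρ hρ hwρ =>
    hwK _ ((mem_joinC_bdry_linkOf_or_eq_empty_iff hK hσ ρ).1 (Or.inl hρ)).2
      (mem_union_left σ hwρ)
  rw [stellar, Set.mem_union, mem_joinC_singleton_iff hwJ,
    mem_joinC_bdry_linkOf_or_eq_empty_iff hK hσ]
  simp only [starOf, Set.mem_sdiff, Set.mem_ofPred_eq]
  tauto

theorem insert_erase_mem_stellar (hK : IsSimpComplex K) (hσ : σ ∈ K) (hwK : ∀ G ∈ K, w ∉ G)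
    {G : Finset A} (hG : G ∈ K) (hσG : σ ⊆ G) {x : A} (hx : x ∈ σ) :
    insert w (G.erase x) ∈ stellar K σ w := by
  have hwG : w ∉ G.erase x := fun h => hwK G hG (mem_of_mem_erase h)
  rw [mem_stellar_iff hK hσ hwK, erase_insert hwG, erase_union_of_mem hx, union_eq_left.2 hσG]
  exact Or.inr ⟨insert_nonempty _ _, fun h => notMem_erase x G (h hx), hG⟩

theorem isFacetOf_stellar_of_isFacetOf (hK : IsSimpComplex K) (hσ : σ ∈ K)
    (hwK : ∀ G ∈ K, w ∉ G) {F : Finset A} (hF : IsFacetOf K F) (hσF : ¬ σ ⊆ F) :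
    IsFacetOf (stellar K σ w) F := by
  have hFσ : F ∪ σ ∉ K := fun h => hσF (hF.2 _ h subset_union_left ▸ subset_union_right)
  refine ⟨(mem_stellar_iff hK hσ hwK F).2 (Or.inl ⟨hF.1, hFσ⟩), fun H hH hFH => ?_⟩
  rcases (mem_stellar_iff hK hσ hwK H).1 hH with ⟨hHK, -⟩ | ⟨-, -, hHσ⟩
  · exact hF.2 H hHK hFH
  · have hFH' : F ⊆ H.erase w := subset_erase.2 ⟨hFH, hwK F hF.1⟩
    exact absurd (hF.2 _ hHσ (hFH'.trans subset_union_left) ▸ subset_union_right) hσF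

theorem isFacetOf_stellar_insert_erase (hK : IsSimpComplex K) (hσ : σ ∈ K)
    (hwK : ∀ G ∈ K, w ∉ G) {G : Finset A} (hG : IsFacetOf K G) (hσG : σ ⊆ G) {x : A}
    (hx : x ∈ σ) : IsFacetOf (stellar K σ w) (insert w (G.erase x)) := by
  refine ⟨insert_erase_mem_stellar hK hσ hwK hG.1 hσG hx, fun H hH hGH => ?_⟩
  have hwH : w ∈ H := hGH (mem_insert_self w _)
  rcases (mem_stellar_iff hK hσ hwK H).1 hH with ⟨hHK, -⟩ | ⟨-, hσH, hHσ⟩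
  · exact absurd hwH (hwK H hHK)
  have hGH' : G.erase x ⊆ H.erase w :=
    subset_erase.2 ⟨(subset_insert _ _).trans hGH, fun h => hwK G hG.1 (mem_of_mem_erase h)⟩
  have hGeq : G = H.erase w ∪ σ :=
    hG.2 _ hHσ ((erase_subset_iff_of_mem (mem_union_right _ hx)).1
      (hGH'.trans subset_union_left))
  have hxH : x ∉ H.erase w := fun h => hσH (hσG.trans ((erase_subset_iff_of_mem h).1 hGH'))
  have hHG : H.erase w = G.erase x :=
    hGH'.antisymm' (subset_erase.2 ⟨hGeq ▸ subset_union_left, hxH⟩)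
  rw [← insert_erase hwH, hHG]

theorem isFacetOf_of_isFacetOf_stellar (hK : IsSimpComplex K) (hσ : σ ∈ K)
    (hwK : ∀ G ∈ K, w ∉ G) {F : Finset A} (hF : IsFacetOf (stellar K σ w) F) (hFK : F ∈ K)
    (hFσ : F ∪ σ ∉ K) : IsFacetOf K F ∧ ¬ σ ⊆ F := by
  refine ⟨⟨hFK, fun G hG hFG => hF.2 G ((mem_stellar_iff hK hσ hwK G).2 (Or.inl ⟨hG, ?_⟩)) hFG⟩,
    fun h => hFσ (by rwa [union_eq_left.2 h])⟩
  exact fun h => hFσ (hK.2 _ h _ (union_subset_union_left hFG)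
    ((hK.1 F hFK).mono subset_union_left))

theorem exists_eq_insert_erase_of_isFacetOf_stellar (hK : IsSimpComplex K) (hσ : σ ∈ K)
    (hwK : ∀ G ∈ K, w ∉ G) (hKfin : K.Finite) {F : Finset A}
    (hF : IsFacetOf (stellar K σ w) F) (hσF : ¬ σ ⊆ F.erase w) (hFσ : F.erase w ∪ σ ∈ K) :
    ∃ G x, IsFacetOf K G ∧ σ ⊆ G ∧ x ∈ σ ∧ F = insert w (G.erase x) := by
  obtain ⟨G, hG, hFG⟩ := exists_isFacetOf_superset hKfin hFσ
  obtain ⟨x, hxσ, hxF⟩ := not_subset.1 hσF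
  have hσG : σ ⊆ G := subset_union_right.trans hFG
  refine ⟨G, x, hG, hσG, hxσ, hF.2 _ (insert_erase_mem_stellar hK hσ hwK hG.1 hσG hxσ) ?_⟩
  exact subset_insert_iff.2 (subset_erase.2 ⟨subset_union_left.trans hFG, hxF⟩)

end

theorem stmt7_general {A : Type*} [DecidableEq A] (V : Set A) (hVfin : V.Finite)
    (K : Set (Finset A)) (hK : IsSimpComplex K) (hKV : OnVertexSet K V)
    (σ : Finset A) (hσ : σ ∈ K) (w : A) (hw : w ∉ V) :
    ∀ F : Finset A, IsFacetOf (stellar K σ w) F ↔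
      (IsFacetOf K F ∧ ¬ σ ⊆ F) ∨
        ∃ G x, IsFacetOf K G ∧ σ ⊆ G ∧ x ∈ σ ∧ F = G.erase x ∪ {w} := by
  intro F
  have hwK : ∀ G ∈ K, w ∉ G := fun G hG hwG => hw (hKV G hG w hwG)
  simp only [union_singleton]
  constructor
  · intro hF
    rcases (mem_stellar_iff hK hσ hwK F).1 hF.1 with ⟨hFK, hFσ⟩ | ⟨-, hσF, hFσ⟩
    · exact Or.inl (isFacetOf_of_isFacetOf_stellar hK hσ hwK hF hFK hFσ)
    · exact Or.inr (exists_eq_insert_erase_of_isFacetOf_stellar hK hσ hwK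
        (hKV.finite hVfin) hF hσF hFσ)
  · rintro (⟨hF, hσF⟩ | ⟨G, x, hG, hσG, hx, rfl⟩)
    · exact isFacetOf_stellar_of_isFacetOf hK hσ hwK hF hσF
    · exact isFacetOf_stellar_insert_erase hK hσ hwK hG hσG hx

theorem stmt7 {A : Type*} [DecidableEq A] (V : Set A) (hVfin : V.Finite)
    (K : Set (Finset A)) (hK : IsSimpComplex K) (hKV : OnVertexSet K V)
    (σ : Finset A) (hσ : σ ∈ K) (hσ2 : 2 ≤ σ.card) (w : A) (hw : w ∉ V) :
    ∀ F : Finset A, IsFacetOf (stellar K σ w) F ↔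
      (IsFacetOf K F ∧ ¬ σ ⊆ F) ∨
        ∃ G x, IsFacetOf K G ∧ σ ⊆ G ∧ x ∈ σ ∧ F = G.erase x ∪ {w} :=
  stmt7_general V hVfin K hK hKV σ hσ w hw
end

section
/- Let K be a simplicial complex on a vertex set V, let v be a vertex of K, let v′ ∉ V be a new vertex, and let e = {v, v′} be the wedged edge of wed_v(K). Then the stellar subdivision ss_e(wed_v(K)) (with new vertex v_e) is isomorphic to the suspension ∂I ∗ K of K; explicitly, the vertex bijection sending the two suspension vertices w ↦ v and w′ ↦ v′, sending v ↦ v_e, and fixing every other vertex of K is an isomorphism from ∂I ∗ K onto ss_e(wed_v(K)). -/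
set_option maxHeartbeats 1600000 in
theorem stmt10 {A : Type*} [DecidableEq A] (V : Set A) (K : Set (Finset A))
    (hK : IsSimpComplex K) (hKV : OnVertexSet K V)
    (v : A) (hv : ({v} : Finset A) ∈ K)
    (v' : A) (hv' : v' ∉ V)
    (ve : A) (hve : ve ∉ V ∧ ve ≠ v')
    (w : A) (hw : w ∉ V ∧ w ≠ v' ∧ w ≠ ve)
    (w' : A) (hw' : w' ∉ V ∧ w' ≠ v' ∧ w' ≠ ve) (hww' : w ≠ w')
    (f : A → A)
    (hf : ∀ x, f x = if x = w then v else if x = w' then v' else if x = v then ve else x) :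
    Set.BijOn f ({w, w'} ∪ V) (V ∪ {v', ve}) ∧
      ∀ σ : Finset A, (↑σ : Set A) ⊆ {w, w'} ∪ V →
        (σ ∈ joinC ({{w}, {w'}} : Set (Finset A)) K ↔
          σ.image f ∈ stellar (wed K v v') ({v, v'} : Finset A) ve) := by
  classical
  obtain ⟨hveV, hvev'⟩ := hve
  obtain ⟨hwV, hwv', hwve⟩ := hw
  obtain ⟨hw'V, hw'v', hw've⟩ := hw'
  have hvV : v ∈ V := hKV _ hv v (Finset.mem_singleton_self v)
  have hvv' : v ≠ v' := fun h => hv' (h ▸ hvV)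
  have hvve : v ≠ ve := fun h => hveV (h ▸ hvV)
  have hvw : v ≠ w := fun h => hwV (h ▸ hvV)
  have hvw' : v ≠ w' := fun h => hw'V (h ▸ hvV)
  have hfw : f w = v := by rw [hf]; simp
  have hfw' : f w' = v' := by rw [hf]; simp [Ne.symm hww']
  have hfv : f v = ve := by rw [hf]; simp [hvw, hvw']
  have hfV : ∀ x ∈ V, x ≠ v → f x = x := by
    intro x hx hxv
    have h1 : x ≠ w := fun h => hwV (h ▸ hx)
    have h2 : x ≠ w' := fun h => hw'V (h ▸ hx)
    rw [hf]; simp [h1, h2, hxv]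
  have hKsubV : ∀ {τ : Finset A}, τ ∈ K → ∀ {x : A}, x ∈ τ → x ∈ V :=
    fun h _ hx => hKV _ h _ hx
  have hKne : ∀ {τ : Finset A}, τ ∈ K → τ.Nonempty := fun h => hK.1 _ h
  -- image computations
  have himg_nv : ∀ (τ : Finset A), (∀ x ∈ τ, x ∈ V) → v ∉ τ → τ.image f = τ := by
    intro τ hτ hvτ
    have h : ∀ x ∈ τ, f x = id x := fun x hx => hfV x (hτ x hx) (fun h => hvτ (h ▸ hx))
    rw [Finset.image_congr (fun x hx => h x hx), Finset.image_id]
  have himg_v : ∀ (τ : Finset A), (∀ x ∈ τ, x ∈ V) → v ∈ τ →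
      τ.image f = insert ve (τ.erase v) := by
    intro τ hτ hvτ
    ext y
    simp only [Finset.mem_image, Finset.mem_insert, Finset.mem_erase]
    constructor
    · rintro ⟨x, hx, rfl⟩
      by_cases hxv : x = v
      · left; rw [hxv, hfv]
      · right; rw [hfV x (hτ x hx) hxv]; exact ⟨hxv, hx⟩
    · rintro (rfl | ⟨hyv, hy⟩)
      · exact ⟨v, hvτ, hfv⟩
      · exact ⟨y, hy, hfV y (hτ y hy) hyv⟩
  -- link of K basic facts
  have hlk_sub : ∀ {τ : Finset A}, τ ∈ linkOf K {v} → τ ∈ K ∧ τ ∪ {v} ∈ K ∧ v ∉ τ := by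
    rintro τ ⟨h1, h2, h3⟩
    refine ⟨h1, h2, fun hvτ => ?_⟩
    have : v ∈ τ ∩ {v} := Finset.mem_inter.mpr ⟨hvτ, Finset.mem_singleton_self v⟩
    rw [h3] at this
    exact absurd this (Finset.notMem_empty v)
  -- membership in wed, part 2
  have hwed2 : ∀ (s' τ : Finset A), (s' = {v} ∨ s' = {v'} ∨ s' = ∅) → τ ∈ K → v ∉ τ →
      s' ∪ τ ∈ wed K v v' := by
    intro s' τ hs' hτ hvτ
    refine Or.inr ⟨?_, s', τ, ?_, Or.inl ⟨hτ, hvτ⟩, rfl⟩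
    · obtain ⟨x, hx⟩ := hKne hτ
      exact ⟨x, Finset.mem_union_right _ hx⟩
    · rcases hs' with h | h | h <;> simp [h]
  have hwed_ne : ∀ {ρ : Finset A}, ρ ∈ wed K v v' → ρ.Nonempty := by
    rintro ρ (⟨h, -⟩ | ⟨h, -⟩) <;> exact h
  have hwed_vert : ∀ {ρ : Finset A}, ρ ∈ wed K v v' → ∀ {x : A}, x ∈ ρ → x ∈ V ∨ x = v' := by
    rintro ρ (⟨hne, s, τ, hs, hτ, rfl⟩ | ⟨hne, s, τ, hs, hτ, rfl⟩) x hx <;>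
      simp only [Set.mem_insert_iff, Set.mem_singleton_iff] at hs <;>
      rcases Finset.mem_union.mp hx with h | h
    · rcases hs with (rfl | rfl | rfl) | rfl
      · exact Or.inl ((Finset.mem_singleton.mp h).symm ▸ hvV)
      · exact Or.inr (Finset.mem_singleton.mp h)
      · rcases Finset.mem_insert.mp h with rfl | h
        · exact Or.inl hvV
        · exact Or.inr (Finset.mem_singleton.mp h)
      · exact absurd h (Finset.notMem_empty x)
    · rcases hτ with hτ | rfl
      · exact Or.inl (hKsubV (hlk_sub hτ).1 h)
      · exact absurd h (Finset.notMem_empty x)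
    · rcases hs with (rfl | rfl) | rfl
      · exact Or.inl ((Finset.mem_singleton.mp h).symm ▸ hvV)
      · exact Or.inr (Finset.mem_singleton.mp h)
      · exact absurd h (Finset.notMem_empty x)
    · rcases hτ with ⟨hτ, -⟩ | rfl
      · exact Or.inl (hKsubV hτ h)
      · exact absurd h (Finset.notMem_empty x)
  -- elements of wed containing both v and v'
  have hwed_both : ∀ ρ ∈ wed K v v', v ∈ ρ → v' ∈ ρ →
      ∃ τ₁, (τ₁ ∈ linkOf K {v} ∨ τ₁ = ∅) ∧ ρ = {v, v'} ∪ τ₁ := by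
    rintro ρ (⟨hne, s, τ, hs, hτ, rfl⟩ | ⟨hne, s, τ, hs, hτ, rfl⟩) hvρ hv'ρ
    · simp only [Set.mem_insert_iff, Set.mem_singleton_iff] at hs
      refine ⟨τ, hτ, ?_⟩
      have hsp : ∀ x ∈ s, x = v ∨ x = v' := by
        rcases hs with (rfl | rfl | rfl) | rfl <;> intro x hx
        · exact Or.inl (Finset.mem_singleton.mp hx)
        · exact Or.inr (Finset.mem_singleton.mp hx)
        · rcases Finset.mem_insert.mp hx with rfl | hx
          · exact Or.inl rfl
          · exact Or.inr (Finset.mem_singleton.mp hx)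
        · exact absurd hx (Finset.notMem_empty x)
      ext x
      simp only [Finset.mem_union, Finset.mem_insert, Finset.mem_singleton]
      constructor
      · rintro (hx | hx)
        · rcases hsp x hx with rfl | rfl <;> tauto
        · tauto
      · rintro ((rfl | rfl) | hx)
        · exact Finset.mem_union.mp hvρ
        · exact Finset.mem_union.mp hv'ρ
        · exact Or.inr hx
    · exfalso
      simp only [Set.mem_insert_iff, Set.mem_singleton_iff] at hs
      simp only [Set.mem_setOf_eq] at hτ
      have hv'τ : v' ∉ τ := by
        rcases hτ with ⟨h, -⟩ | rfl
        · exact fun hh => hv' (hKsubV h hh)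
        · exact Finset.notMem_empty v'
      have hvτ : v ∉ τ := by
        rcases hτ with ⟨-, h⟩ | rfl
        · exact h
        · exact Finset.notMem_empty v
      rcases Finset.mem_union.mp hv'ρ with h | h
      · rcases hs with (rfl | rfl) | rfl
        · exact hvv' (Finset.mem_singleton.mp h).symm
        · rcases Finset.mem_union.mp hvρ with h' | h'
          · exact hvv' (Finset.mem_singleton.mp h')
          · exact hvτ h'
        · exact absurd h (Finset.notMem_empty v')
      · exact hv'τ h
  -- difference computation
  have hdiff3 : ∀ (t s τ : Finset A), t ⊆ {ve} → s ⊆ ({v, v'} : Finset A) →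
      (∀ x ∈ τ, x ∈ V) → v ∉ τ → (t ∪ s ∪ τ) \ {v, v', ve} = τ := by
    intro t s τ ht hs hτ hvτ
    ext x
    simp only [Finset.mem_sdiff, Finset.mem_union, Finset.mem_insert, Finset.mem_singleton]
    constructor
    · rintro ⟨(hx | hx) | hx, hn⟩
      · exact absurd (Finset.mem_singleton.mp (ht hx)) (by tauto)
      · rcases Finset.mem_insert.mp (hs hx) with h | h
        · exact absurd h (by tauto)
        · exact absurd (Finset.mem_singleton.mp h) (by tauto)
      · exact hx
    · intro hx
      have hxV : x ∈ V := hτ x hx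
      refine ⟨Or.inr hx, ?_⟩
      push_neg
      exact ⟨fun h => hvτ (h ▸ hx), fun h => hv' (h ▸ hxV), fun h => hveV (h ▸ hxV)⟩
  -- link of wed at {v,v'} equals link of K at {v}
  have hlk_wed : ∀ {τ : Finset A}, τ ∈ linkOf K ({v} : Finset A) →
      τ ∈ linkOf (wed K v v') ({v, v'} : Finset A) := by
    intro τ hτ
    obtain ⟨hτK, hτvK, hvτ⟩ := hlk_sub hτ
    have hτV : ∀ x ∈ τ, x ∈ V := fun x hx => hKsubV hτK hx
    refine ⟨?_, ?_, ?_⟩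
    · have h := hwed2 ∅ τ (Or.inr (Or.inr rfl)) hτK hvτ
      rwa [Finset.empty_union] at h
    · refine Or.inl ⟨⟨v, by simp⟩, {v, v'}, τ, Or.inl (by simp), Or.inl hτ, ?_⟩
      exact Finset.union_comm τ {v, v'}
    · apply Finset.eq_empty_of_forall_notMem
      intro x hx
      obtain ⟨h1, h2⟩ := Finset.mem_inter.mp hx
      rcases Finset.mem_insert.mp h2 with rfl | h3
      · exact hvτ h1
      · exact hv' (Finset.mem_singleton.mp h3 ▸ hτV x h1)
  -- small fix for the last subproof above is below; now the converse
  have hlkwed_lk : ∀ {τ : Finset A}, τ ∈ linkOf (wed K v v') ({v, v'} : Finset A) →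
      τ ∈ linkOf K ({v} : Finset A) := by
    rintro τ ⟨hτw, hτe, hτd⟩
    have hvτ : v ∉ τ := by
      intro h
      have : v ∈ τ ∩ {v, v'} := Finset.mem_inter.mpr ⟨h, by simp⟩
      rw [hτd] at this; exact absurd this (Finset.notMem_empty v)
    have hv'τ : v' ∉ τ := by
      intro h
      have : v' ∈ τ ∩ {v, v'} := Finset.mem_inter.mpr ⟨h, by simp⟩
      rw [hτd] at this; exact absurd this (Finset.notMem_empty v')
    have hτV : ∀ x ∈ τ, x ∈ V := by
      intro x hx
      rcases hwed_vert hτw hx with h | rfl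
      · exact h
      · exact absurd hx hv'τ
    obtain ⟨τ₁, hτ₁, heq⟩ := hwed_both _ hτe (by simp) (by simp)
    have hτ₁V : ∀ x ∈ τ₁, x ∈ V := by
      rcases hτ₁ with h | rfl
      · exact fun x hx => hKsubV (hlk_sub h).1 hx
      · exact fun x hx => absurd hx (Finset.notMem_empty x)
    have hvτ₁ : v ∉ τ₁ := by
      rcases hτ₁ with h | rfl
      · exact (hlk_sub h).2.2
      · exact Finset.notMem_empty v
    have hττ₁ : τ = τ₁ := by
      have e1 : (τ ∪ {v, v'}) \ {v, v', ve} = τ := by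
        have := hdiff3 ∅ {v, v'} τ (by simp) (Finset.Subset.refl _) hτV hvτ
        rw [Finset.empty_union, Finset.union_comm] at this
        exact this
      have e2 : (({v, v'} : Finset A) ∪ τ₁) \ {v, v', ve} = τ₁ := by
        have := hdiff3 ∅ {v, v'} τ₁ (by simp) (Finset.Subset.refl _) hτ₁V hvτ₁
        rwa [Finset.empty_union] at this
      rw [← e1, heq, e2]
    rcases hτ₁ with h | rfl
    · rwa [hττ₁]
    · exact absurd (hwed_ne hτw) (by rw [hττ₁]; simp)
  -- not in star
  have hnotstar : ∀ (s' τ : Finset A), s' ⊆ ({v, v'} : Finset A) → τ ∈ K → v ∉ τ →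
      τ ∪ {v} ∉ K → s' ∪ τ ∉ starOf (wed K v v') {v, v'} := by
    rintro s' τ hs' hτ hvτ hτv ⟨-, hun⟩
    have hτV : ∀ x ∈ τ, x ∈ V := fun x hx => hKsubV hτ hx
    obtain ⟨τ₁, hτ₁, heq⟩ := hwed_both _ hun (by simp) (by simp)
    have hτ₁V : ∀ x ∈ τ₁, x ∈ V := by
      rcases hτ₁ with h | rfl
      · exact fun x hx => hKsubV (hlk_sub h).1 hx
      · exact fun x hx => absurd hx (Finset.notMem_empty x)
    have hvτ₁ : v ∉ τ₁ := by
      rcases hτ₁ with h | rfl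
      · exact (hlk_sub h).2.2
      · exact Finset.notMem_empty v
    have hττ₁ : τ = τ₁ := by
      have e1 : (s' ∪ τ ∪ {v, v'}) \ {v, v', ve} = τ := by
        have := hdiff3 ∅ (s' ∪ {v, v'}) τ (by simp)
          (Finset.union_subset hs' (Finset.Subset.refl _)) hτV hvτ
        rw [Finset.empty_union] at this
        rw [Finset.union_right_comm]
        exact this
      have e2 : (({v, v'} : Finset A) ∪ τ₁) \ {v, v', ve} = τ₁ := by
        have := hdiff3 ∅ {v, v'} τ₁ (by simp) (Finset.Subset.refl _) hτ₁V hvτ₁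
        rwa [Finset.empty_union] at this
      rw [← e1, heq, e2]
    rcases hτ₁ with h | rfl
    · exact hτv (hττ₁ ▸ (hlk_sub h).2.1)
    · exact absurd (hKne hτ) (by rw [hττ₁]; simp)
  -- boundary facts
  have hbv : ({v} : Finset A) ∈ bdry ({v, v'} : Finset A) := by
    refine ⟨?_, ⟨v, Finset.mem_singleton_self v⟩⟩
    rw [Finset.ssubset_iff_subset_ne]
    refine ⟨by simp, fun h => ?_⟩
    have : v' ∈ ({v} : Finset A) := h ▸ (by simp)
    exact hvv' (Finset.mem_singleton.mp this).symm
  have hbv' : ({v'} : Finset A) ∈ bdry ({v, v'} : Finset A) := by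
    refine ⟨?_, ⟨v', Finset.mem_singleton_self v'⟩⟩
    rw [Finset.ssubset_iff_subset_ne]
    refine ⟨by simp, fun h => ?_⟩
    have : v ∈ ({v'} : Finset A) := h ▸ (by simp)
    exact hvv' (Finset.mem_singleton.mp this)
  -- cone introduction
  have hcone_intro : ∀ (t s τ : Finset A), (t = {ve} ∨ t = ∅) →
      (s = {v} ∨ s = {v'} ∨ s = ∅) → (τ ∈ linkOf K {v} ∨ τ = ∅) → (t ∪ s ∪ τ).Nonempty →
      t ∪ s ∪ τ ∈ joinC ({{ve}} : Set (Finset A))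
        (joinC (bdry ({v, v'} : Finset A)) (linkOf (wed K v v') {v, v'})) := by
    intro t s τ ht hs hτ hne
    refine ⟨hne, t, s ∪ τ, by rcases ht with rfl | rfl <;> simp, ?_, Finset.union_assoc t s τ⟩
    by_cases hst : s ∪ τ = ∅
    · exact Or.inr hst
    · left
      refine ⟨Finset.nonempty_iff_ne_empty.mpr hst, s, τ, ?_, ?_, rfl⟩
      · rcases hs with rfl | rfl | rfl
        · exact Or.inl hbv
        · exact Or.inl hbv'
        · exact Or.inr rfl
      · rcases hτ with h | rfl
        · exact Or.inl (hlk_wed h)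
        · exact Or.inr rfl
  -- cone elimination
  have hcone_elim : ∀ ρ : Finset A, ρ ∈ joinC ({{ve}} : Set (Finset A))
      (joinC (bdry ({v, v'} : Finset A)) (linkOf (wed K v v') {v, v'})) →
      (ρ \ {v, v', ve} ∈ linkOf K {v} ∨ ρ \ {v, v', ve} = ∅) ∧ ¬(v ∈ ρ ∧ v' ∈ ρ) := by
    rintro ρ ⟨hne, t, ρ', ht, hρ', rfl⟩
    have ht' : t ⊆ {ve} := by
      rcases ht with h | rfl
      · rw [Set.mem_singleton_iff.mp h]
      · simp
    rcases hρ' with hρ' | rfl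
    · obtain ⟨hne', s, τ, hs, hτ, rfl⟩ := hρ'
      have hss : s ⊆ {v, v'} ∧ ¬(({v, v'} : Finset A) ⊆ s) := by
        rcases hs with h | rfl
        · obtain ⟨hss, -⟩ := h
          exact ⟨hss.1, (Finset.ssubset_def.mp hss).2⟩
        · exact ⟨Finset.empty_subset _, fun h => by
            have : v ∈ (∅ : Finset A) := h (by simp)
            exact absurd this (Finset.notMem_empty v)⟩
      have hτlk : τ ∈ linkOf K {v} ∨ τ = ∅ := by
        rcases hτ with h | rfl
        · exact Or.inl (hlkwed_lk h)
        · exact Or.inr rfl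
      have hτV : ∀ x ∈ τ, x ∈ V := by
        rcases hτlk with h | rfl
        · exact fun x hx => hKsubV (hlk_sub h).1 hx
        · exact fun x hx => absurd hx (Finset.notMem_empty x)
      have hvτ : v ∉ τ := by
        rcases hτlk with h | rfl
        · exact (hlk_sub h).2.2
        · exact Finset.notMem_empty v
      constructor
      · rw [← Finset.union_assoc, hdiff3 t s τ ht' hss.1 hτV hvτ]
        exact hτlk
      · rintro ⟨h1, h2⟩
        apply hss.2
        have hv_s : v ∈ s := by
          rcases Finset.mem_union.mp h1 with h | h
          · exact absurd (Finset.mem_singleton.mp (ht' h)) hvve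
          · rcases Finset.mem_union.mp h with h | h
            · exact h
            · exact absurd h hvτ
        have hv'_s : v' ∈ s := by
          rcases Finset.mem_union.mp h2 with h | h
          · exact absurd (Finset.mem_singleton.mp (ht' h)) (Ne.symm hvev')
          · rcases Finset.mem_union.mp h with h | h
            · exact h
            · exact absurd h (fun hh => hv' (hτV v' hh))
        intro x hx
        rcases Finset.mem_insert.mp hx with rfl | hx
        · exact hv_s
        · exact Finset.mem_singleton.mp hx ▸ hv'_s
    · rw [Finset.union_empty]
      constructor
      · right
        apply Finset.eq_empty_of_forall_notMem
        intro x hx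
        obtain ⟨h1, h2⟩ := Finset.mem_sdiff.mp hx
        exact h2 (by simp [Finset.mem_singleton.mp (ht' h1)])
      · rintro ⟨h1, -⟩
        exact hvve (Finset.mem_singleton.mp (ht' h1))
  -- wed-minus-star elimination
  have hws_elim : ∀ ρ : Finset A, ρ ∈ wed K v v' → ρ ∉ starOf (wed K v v') {v, v'} →
      (ρ \ {v, v', ve} ∈ K ∨ ρ \ {v, v', ve} = ∅) ∧ ¬(v ∈ ρ ∧ v' ∈ ρ) ∧ ve ∉ ρ := by
    intro ρ hρ hst
    have hveρ : ve ∉ ρ := by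
      intro h
      rcases hwed_vert hρ h with h' | h'
      · exact hveV h'
      · exact hvev' h'
    have hboth : ¬(v ∈ ρ ∧ v' ∈ ρ) := by
      rintro ⟨h1, h2⟩
      apply hst
      have hsub : ({v, v'} : Finset A) ⊆ ρ := by
        intro x hx
        rcases Finset.mem_insert.mp hx with rfl | hx
        · exact h1
        · exact Finset.mem_singleton.mp hx ▸ h2
      exact ⟨hρ, by rwa [Finset.union_eq_left.mpr hsub]⟩
    refine ⟨?_, hboth, hveρ⟩
    rcases hρ with hρ1 | hρ2
    · exfalso
      apply hst
      obtain ⟨hne, s, τ, hs, hτ, rfl⟩ := hρ1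
      refine ⟨Or.inl ⟨hne, s, τ, hs, hτ, rfl⟩, ?_⟩
      simp only [Set.mem_insert_iff, Set.mem_singleton_iff] at hs
      have hsp : ∀ x ∈ s, x = v ∨ x = v' := by
        rcases hs with (rfl | rfl | rfl) | rfl <;> intro x hx
        · exact Or.inl (Finset.mem_singleton.mp hx)
        · exact Or.inr (Finset.mem_singleton.mp hx)
        · rcases Finset.mem_insert.mp hx with rfl | hx
          · exact Or.inl rfl
          · exact Or.inr (Finset.mem_singleton.mp hx)
        · exact absurd hx (Finset.notMem_empty x)
      refine Or.inl ⟨⟨v, by simp⟩, {v, v'}, τ, Or.inl (by simp), hτ, ?_⟩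
      ext x
      simp only [Finset.mem_union, Finset.mem_insert, Finset.mem_singleton]
      constructor
      · rintro ((hx | hx) | hx)
        · rcases hsp x hx with rfl | rfl <;> tauto
        · tauto
        · tauto
      · rintro ((rfl | rfl) | hx) <;> tauto
    · obtain ⟨hne, s, τ, hs, hτ, rfl⟩ := hρ2
      simp only [Set.mem_insert_iff, Set.mem_singleton_iff] at hs
      have hsv : s ⊆ {v, v'} := by rcases hs with (rfl | rfl) | rfl <;> simp
      rcases hτ with ⟨hτK, hvτ⟩ | rfl
      · left
        have := hdiff3 ∅ s τ (by simp) hsv (fun x hx => hKsubV hτK hx) hvτ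
        rw [Finset.empty_union] at this
        rwa [this]
      · right
        rw [Finset.union_empty]
        apply Finset.eq_empty_of_forall_notMem
        intro x hx
        obtain ⟨h1, h2⟩ := Finset.mem_sdiff.mp hx
        rcases Finset.mem_insert.mp (hsv h1) with rfl | h3
        · exact h2 (by simp)
        · rw [Finset.mem_singleton.mp h3] at h2
          exact h2 (by simp)
  constructor
  · -- the bijection
    refine ⟨?_, ?_, ?_⟩
    · rintro x ((rfl | rfl) | hx)
      · rw [hfw]; exact Or.inl hvV
      · rw [hfw']; exact Or.inr (Or.inl rfl)
      · by_cases hxv : x = v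
        · subst hxv; rw [hfv]; exact Or.inr (Or.inr rfl)
        · rw [hfV x hx hxv]; exact Or.inl hx
    · set g : A → A := fun y => if y = v then w else if y = v' then w' else if y = ve then v else y with hg
      have hginv : ∀ x ∈ ({w, w'} : Set A) ∪ V, g (f x) = x := by
        rintro x ((rfl | rfl) | hx)
        · rw [hfw]; simp [hg]
        · rw [hfw']; simp [hg, Ne.symm hvv']
        · by_cases hxv : x = v
          · subst hxv; rw [hfv]; simp [hg, Ne.symm hvve, hvev']
          · rw [hfV x hx hxv]
            have h1 : x ≠ v' := fun h => hv' (h ▸ hx)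
            have h2 : x ≠ ve := fun h => hveV (h ▸ hx)
            simp [hg, hxv, h1, h2]
      intro a ha b hb hab
      rw [← hginv a ha, ← hginv b hb, hab]
    · rintro y (hy | (rfl | rfl))
      · by_cases hyv : y = v
        · subst hyv
          exact ⟨w, Or.inl (by simp), hfw⟩
        · exact ⟨y, Or.inr hy, hfV y hy hyv⟩
      · exact ⟨w', Or.inl (by simp), hfw'⟩
      · exact ⟨v, Or.inr hvV, hfv⟩
  · -- the isomorphism on faces
    intro σ hσsub
    have hdom : ∀ x ∈ σ, x = w ∨ x = w' ∨ x ∈ V := by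
      intro x hx
      have := hσsub (Finset.mem_coe.mpr hx)
      simp only [Set.mem_union, Set.mem_insert_iff, Set.mem_singleton_iff] at this
      tauto
    constructor
    · -- forward
      rintro ⟨hne, s, τ, hs, hτ, rfl⟩
      simp only [stellar, Set.mem_union, Set.mem_diff]
      simp only [Set.mem_insert_iff, Set.mem_singleton_iff] at hs
      have hs₁ : s.image f = {v} ∨ s.image f = {v'} ∨ (s.image f = ∅ ∧ s = ∅) := by
        rcases hs with (rfl | rfl) | rfl
        · left; rw [Finset.image_singleton, hfw]
        · right; left; rw [Finset.image_singleton, hfw']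
        · right; right; exact ⟨Finset.image_empty f, rfl⟩
      have hs₁' : s.image f = {v} ∨ s.image f = {v'} ∨ s.image f = ∅ := by tauto
      have hsub₁ : s.image f ⊆ {v, v'} := by
        rcases hs₁' with h | h | h <;> rw [h] <;> simp
      rcases hτ with hτK | rfl
      · have hτV : ∀ x ∈ τ, x ∈ V := fun x hx => hKsubV hτK hx
        by_cases hvτ : v ∈ τ
        · -- contains v : goes to the cone over ve
          have himgτ : τ.image f = insert ve (τ.erase v) := himg_v τ hτV hvτ
          have herase : τ.erase v ∈ linkOf K {v} ∨ τ.erase v = ∅ := by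
            by_cases he : τ.erase v = ∅
            · exact Or.inr he
            · left
              have hne' : (τ.erase v).Nonempty := Finset.nonempty_iff_ne_empty.mpr he
              refine ⟨hK.2 τ hτK _ (Finset.erase_subset v τ) hne', ?_, ?_⟩
              · have heq : τ.erase v ∪ {v} = τ := by
                  ext x
                  simp only [Finset.mem_union, Finset.mem_erase, Finset.mem_singleton]
                  constructor
                  · rintro (⟨-, h⟩ | rfl)
                    · exact h
                    · exact hvτ
                  · intro hx
                    by_cases hxv : x = v
                    · exact Or.inr hxv
                    · exact Or.inl ⟨hxv, hx⟩
                rw [heq]; exact hτK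
              · exact Finset.inter_singleton_of_notMem (Finset.notMem_erase v τ)
          right
          have hcone := hcone_intro {ve} (s.image f) (τ.erase v) (Or.inl rfl) hs₁' herase
            ⟨ve, Finset.mem_union_left _ (Finset.mem_union_left _ (Finset.mem_singleton_self ve))⟩
          have heq2 : (s ∪ τ).image f = {ve} ∪ s.image f ∪ τ.erase v := by
            rw [Finset.image_union, himgτ, Finset.insert_eq, Finset.union_left_comm,
              Finset.union_assoc]
          rw [heq2]; exact hcone
        · have himgτ : τ.image f = τ := himg_nv τ hτV hvτ
          by_cases hlkc : τ ∪ {v} ∈ K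
          · right
            have hτlk : τ ∈ linkOf K {v} :=
              ⟨hτK, hlkc, Finset.inter_singleton_of_notMem hvτ⟩
            have hcone := hcone_intro ∅ (s.image f) τ (Or.inr rfl) hs₁' (Or.inl hτlk)
              (by obtain ⟨x, hx⟩ := hKne hτK
                  exact ⟨x, Finset.mem_union_right _ hx⟩)
            have heq2 : (s ∪ τ).image f = ∅ ∪ s.image f ∪ τ := by
              rw [Finset.image_union, himgτ, Finset.empty_union]
            rw [heq2]; exact hcone
          · left
            have heq2 : (s ∪ τ).image f = s.image f ∪ τ := by
              rw [Finset.image_union, himgτ]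
            rw [heq2]
            exact ⟨hwed2 _ τ hs₁' hτK hvτ, hnotstar _ τ hsub₁ hτK hvτ hlkc⟩
      · -- τ = ∅
        rw [Finset.union_empty] at hne ⊢
        rcases hs with (rfl | rfl) | rfl
        · right
          have hcone := hcone_intro ∅ {v} ∅ (Or.inr rfl) (Or.inl rfl) (Or.inr rfl)
            (by simp)
          have heq2 : ({w} : Finset A).image f = ∅ ∪ {v} ∪ ∅ := by
            rw [Finset.image_singleton, hfw]; simp
          rw [heq2]; exact hcone
        · right
          have hcone := hcone_intro ∅ {v'} ∅ (Or.inr rfl) (Or.inr (Or.inl rfl)) (Or.inr rfl)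
            (by simp)
          have heq2 : ({w'} : Finset A).image f = ∅ ∪ {v'} ∪ ∅ := by
            rw [Finset.image_singleton, hfw']; simp
          rw [heq2]; exact hcone
        · exact absurd hne (by simp)
    · -- backward
      intro hρ
      simp only [stellar, Set.mem_union, Set.mem_diff] at hρ
      have hkey : (σ.image f \ {v, v', ve} ∈ K ∨ σ.image f \ {v, v', ve} = ∅) ∧
          ¬(v ∈ σ.image f ∧ v' ∈ σ.image f) ∧
          (v ∈ σ → (σ.image f \ {v, v', ve}) ∪ {v} ∈ K) := by
        rcases hρ with ⟨hρw, hρs⟩ | hρc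
        · obtain ⟨h1, h2, h3⟩ := hws_elim _ hρw hρs
          exact ⟨h1, h2, fun h => absurd (hfv ▸ Finset.mem_image_of_mem f h) h3⟩
        · obtain ⟨h1, h2⟩ := hcone_elim _ hρc
          refine ⟨?_, h2, ?_⟩
          · rcases h1 with h | h
            · exact Or.inl (hlk_sub h).1
            · exact Or.inr h
          · intro _
            rcases h1 with h | h
            · exact (hlk_sub h).2.1
            · rw [h, Finset.empty_union]; exact hv
      have hρne : (σ.image f).Nonempty := by
        rcases hρ with ⟨h, -⟩ | h
        · exact hwed_ne h
        · exact h.1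
      have hσne : σ.Nonempty := by
        obtain ⟨y, hy⟩ := hρne
        obtain ⟨x, hx, -⟩ := Finset.mem_image.mp hy
        exact ⟨x, hx⟩
      have hmemρ : ∀ y, y ∈ σ.image f ↔ (w ∈ σ ∧ y = v) ∨ (w' ∈ σ ∧ y = v') ∨
          (v ∈ σ ∧ y = ve) ∨ (y ∈ σ ∧ y ∈ V ∧ y ≠ v) := by
        intro y
        simp only [Finset.mem_image]
        constructor
        · rintro ⟨x, hx, rfl⟩
          rcases hdom x hx with rfl | rfl | hxV
          · exact Or.inl ⟨hx, hfw⟩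
          · exact Or.inr (Or.inl ⟨hx, hfw'⟩)
          · by_cases hxv : x = v
            · subst hxv; exact Or.inr (Or.inr (Or.inl ⟨hx, hfv⟩))
            · rw [hfV x hxV hxv]; exact Or.inr (Or.inr (Or.inr ⟨hx, hxV, hxv⟩))
        · rintro (⟨h, rfl⟩ | ⟨h, rfl⟩ | ⟨h, rfl⟩ | ⟨h, hxV, hxv⟩)
          · exact ⟨w, h, hfw⟩
          · exact ⟨w', h, hfw'⟩
          · exact ⟨v, h, hfv⟩
          · exact ⟨y, h, hfV y hxV hxv⟩
      have hboth' : ¬(w ∈ σ ∧ w' ∈ σ) := by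
        rintro ⟨h1, h2⟩
        exact hkey.2.1 ⟨hfw ▸ Finset.mem_image_of_mem f h1,
          hfw' ▸ Finset.mem_image_of_mem f h2⟩
      have hσdecomp : σ = σ ∩ {w, w'} ∪ σ \ {w, w'} := by
        ext x
        simp only [Finset.mem_union, Finset.mem_inter, Finset.mem_sdiff]
        tauto
      refine ⟨hσne, σ ∩ {w, w'}, σ \ {w, w'}, ?_, ?_, hσdecomp⟩
      · by_cases h1 : w ∈ σ
        · have h2 : w' ∉ σ := fun h => hboth' ⟨h1, h⟩
          left
          simp only [Set.mem_insert_iff, Set.mem_singleton_iff]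
          left
          ext x
          simp only [Finset.mem_inter, Finset.mem_insert, Finset.mem_singleton]
          constructor
          · rintro ⟨hx, rfl | rfl⟩
            · rfl
            · exact absurd hx h2
          · rintro rfl
            exact ⟨h1, Or.inl rfl⟩
        · by_cases h2 : w' ∈ σ
          · left
            simp only [Set.mem_insert_iff, Set.mem_singleton_iff]
            right
            ext x
            simp only [Finset.mem_inter, Finset.mem_insert, Finset.mem_singleton]
            constructor
            · rintro ⟨hx, rfl | rfl⟩
              · exact absurd hx h1
              · rfl
            · rintro rfl
              exact ⟨h2, Or.inr rfl⟩
          · right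
            apply Finset.eq_empty_of_forall_notMem
            intro x hx
            obtain ⟨hxσ, hx2⟩ := Finset.mem_inter.mp hx
            rcases Finset.mem_insert.mp hx2 with rfl | hx3
            · exact h1 hxσ
            · rw [Finset.mem_singleton.mp hx3] at hxσ
              exact h2 hxσ
      · by_cases hvσ : v ∈ σ
        · left
          have h3 := hkey.2.2 hvσ
          have heq : σ \ {w, w'} = (σ.image f \ {v, v', ve}) ∪ {v} := by
            ext x
            simp only [Finset.mem_sdiff, Finset.mem_union, Finset.mem_insert,
              Finset.mem_singleton]
            constructor
            · rintro ⟨hxσ, hxn⟩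
              push_neg at hxn
              by_cases hxv : x = v
              · exact Or.inr hxv
              · left
                have hxV : x ∈ V := by
                  rcases hdom x hxσ with rfl | rfl | h
                  · exact absurd rfl hxn.1
                  · exact absurd rfl hxn.2
                  · exact h
                refine ⟨(hmemρ x).mpr (Or.inr (Or.inr (Or.inr ⟨hxσ, hxV, hxv⟩))), ?_⟩
                push_neg
                exact ⟨hxv, fun h => hv' (h ▸ hxV), fun h => hveV (h ▸ hxV)⟩
            · rintro (⟨hx1, hx2⟩ | rfl)
              · push_neg at hx2
                rcases (hmemρ x).mp hx1 with ⟨-, rfl⟩ | ⟨-, rfl⟩ | ⟨-, rfl⟩ | ⟨hxσ, hxV, -⟩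
                · exact absurd rfl hx2.1
                · exact absurd rfl hx2.2.1
                · exact absurd rfl hx2.2.2
                · refine ⟨hxσ, ?_⟩
                  push_neg
                  exact ⟨fun h => hwV (h ▸ hxV), fun h => hw'V (h ▸ hxV)⟩
              · refine ⟨hvσ, ?_⟩
                push_neg
                exact ⟨hvw, hvw'⟩
          rw [heq]
          exact h3
        · have heq : σ \ {w, w'} = σ.image f \ {v, v', ve} := by
            ext x
            simp only [Finset.mem_sdiff, Finset.mem_insert, Finset.mem_singleton]
            constructor
            · rintro ⟨hxσ, hxn⟩
              push_neg at hxn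
              have hxV : x ∈ V := by
                rcases hdom x hxσ with rfl | rfl | h
                · exact absurd rfl hxn.1
                · exact absurd rfl hxn.2
                · exact h
              have hxv : x ≠ v := fun h => hvσ (h ▸ hxσ)
              refine ⟨(hmemρ x).mpr (Or.inr (Or.inr (Or.inr ⟨hxσ, hxV, hxv⟩))), ?_⟩
              push_neg
              exact ⟨hxv, fun h => hv' (h ▸ hxV), fun h => hveV (h ▸ hxV)⟩
            · rintro ⟨hx1, hx2⟩
              push_neg at hx2
              rcases (hmemρ x).mp hx1 with ⟨h, rfl⟩ | ⟨h, rfl⟩ | ⟨h, rfl⟩ | ⟨hxσ, hxV, -⟩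
              · exact absurd rfl hx2.1
              · exact absurd rfl hx2.2.1
              · exact absurd h hvσ
              · refine ⟨hxσ, ?_⟩
                push_neg
                exact ⟨fun h => hwV (h ▸ hxV), fun h => hw'V (h ▸ hxV)⟩
          rw [heq]
          exact hkey.1
end

section
/- Let K be a simplicial complex on [m] = {1,…,m} in which every element of [m] is a vertex, let J = (j_1,…,j_m) be a tuple of positive integers with j_v ≤ 2 for all v, and suppose σ = {v ∈ [m] : j_v = 2} is nonempty. Then the link of {v^{(1)} : v ∈ σ} in K(J) equals K (identifying each v^{(0)} with v). -/
namespace Stmt11Aux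

variable {A : Type*} [DecidableEq A]

def SubClosed (F : Set (Finset A)) : Prop :=
  ∀ σ ∈ F, ∀ τ : Finset A, τ ⊆ σ → τ.Nonempty → τ ∈ F

lemma linkOf_empty (K : Set (Finset A)) : linkOf K ∅ = K := by
  simp [linkOf]

lemma linkOf_subclosed {K : Set (Finset A)} (hK : IsSimpComplex K) (σ : Finset A) :
    SubClosed (linkOf K σ) := by
  rintro τ ⟨h1, h2, h3⟩ ρ hρ hne
  refine ⟨hK.2 τ h1 ρ hρ hne, hK.2 _ h2 _ (Finset.union_subset_union hρ le_rfl)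
    (hne.mono Finset.subset_union_left), ?_⟩
  have : ρ ∩ σ ⊆ τ ∩ σ := Finset.inter_subset_inter hρ le_rfl
  rw [h3] at this
  exact Finset.subset_empty.1 this

lemma joinC_isSimpComplex {F G : Set (Finset A)} (hF : SubClosed F) (hG : SubClosed G) :
    IsSimpComplex (joinC F G) := by
  constructor
  · rintro σ ⟨h, _⟩; exact h
  · rintro ρ ⟨hne, σ, τ, hσ, hτ, rfl⟩ ρ' hsub hne'
    refine ⟨hne', ρ' ∩ σ, ρ' \ σ, ?_, ?_, ?_⟩
    · rcases eq_or_ne (ρ' ∩ σ) ∅ with h | h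
      · right; exact h
      · left
        rcases hσ with hσ | rfl
        · exact hF σ hσ _ Finset.inter_subset_right (Finset.nonempty_iff_ne_empty.2 h)
        · simp at h
    · rcases eq_or_ne (ρ' \ σ) ∅ with h | h
      · right; exact h
      · left
        rcases hτ with hτ | rfl
        · refine hG τ hτ _ ?_ (Finset.nonempty_iff_ne_empty.2 h)
          intro x hx
          have hx' := Finset.mem_sdiff.1 hx
          have := hsub hx'.1
          rcases Finset.mem_union.1 this with h | h
          · exact absurd h hx'.2
          · exact h
        · refine absurd (Finset.sdiff_eq_empty_iff_subset.2 ?_) h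
          simpa using hsub
    · ext x
      simp only [Finset.mem_union, Finset.mem_inter, Finset.mem_sdiff]
      constructor
      · intro hx; by_cases hxσ : x ∈ σ
        · exact Or.inl ⟨hx, hxσ⟩
        · exact Or.inr ⟨hx, hxσ⟩
      · rintro (⟨h, _⟩ | ⟨h, _⟩) <;> exact h

lemma union_isSimpComplex {F G : Set (Finset A)} (hF : IsSimpComplex F) (hG : IsSimpComplex G) :
    IsSimpComplex (F ∪ G) := by
  constructor
  · rintro σ (h | h); exacts [hF.1 σ h, hG.1 σ h]
  · rintro σ (h | h) τ hτ hne
    · exact Or.inl (hF.2 σ h τ hτ hne)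
    · exact Or.inr (hG.2 σ h τ hτ hne)

lemma pair_subclosed (v v' : A) : SubClosed ({{v}, {v'}, {v, v'}} : Set (Finset A)) := by
  rintro σ hσ τ hτ hne
  simp only [Set.mem_insert_iff, Set.mem_singleton_iff] at hσ ⊢
  have hsub : τ ⊆ {v, v'} := by
    rcases hσ with rfl | rfl | rfl
    · exact hτ.trans (by intro x hx; simp at hx; simp [hx])
    · exact hτ.trans (by intro x hx; simp at hx; simp [hx])
    · exact hτ
  by_cases hv : v ∈ τ <;> by_cases hv' : v' ∈ τ
  · right; right
    apply Finset.Subset.antisymm hsub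
    intro x hx; simp at hx; rcases hx with rfl | rfl <;> assumption
  · left
    apply Finset.Subset.antisymm
    · intro x hx
      rcases Finset.mem_insert.1 (hsub hx) with rfl | h
      · simp
      · simp only [Finset.mem_singleton] at h; subst h; exact absurd hx hv'
    · simpa using hv
  · right; left
    apply Finset.Subset.antisymm
    · intro x hx
      rcases Finset.mem_insert.1 (hsub hx) with rfl | h
      · exact absurd hx hv
      · exact h
    · simpa using hv'
  · obtain ⟨x, hx⟩ := hne
    rcases Finset.mem_insert.1 (hsub hx) with rfl | h
    · exact absurd hx hv
    · simp only [Finset.mem_singleton] at h; subst h; exact absurd hx hv'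

lemma pair_subclosed' (v v' : A) : SubClosed ({{v}, {v'}} : Set (Finset A)) := by
  rintro σ hσ τ hτ hne
  simp only [Set.mem_insert_iff, Set.mem_singleton_iff] at hσ ⊢
  rcases hσ with rfl | rfl
  · left; exact Finset.Subset.antisymm hτ (by
      obtain ⟨x, hx⟩ := hne; have := hτ hx; simp at this; subst this; simpa using hx)
  · right; exact Finset.Subset.antisymm hτ (by
      obtain ⟨x, hx⟩ := hne; have := hτ hx; simp at this; subst this; simpa using hx)

lemma minus_subclosed {K : Set (Finset A)} (hK : IsSimpComplex K) (v : A) :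
    SubClosed {σ | σ ∈ K ∧ v ∉ σ} := by
  rintro σ ⟨h1, h2⟩ τ hτ hne
  exact ⟨hK.2 σ h1 τ hτ hne, fun h => h2 (hτ h)⟩

lemma wed_isSimpComplex {K : Set (Finset A)} (hK : IsSimpComplex K) (v v' : A) :
    IsSimpComplex (wed K v v') :=
  union_isSimpComplex
    (joinC_isSimpComplex (pair_subclosed v v') (linkOf_subclosed hK {v}))
    (joinC_isSimpComplex (pair_subclosed' v v') (minus_subclosed hK v))

lemma subset_wed {K : Set (Finset A)} (hK : IsSimpComplex K) (v v' : A) :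
    K ⊆ wed K v v' := by
  intro τ hτ
  by_cases hv : v ∈ τ
  · left
    refine ⟨hK.1 τ hτ, {v}, τ \ {v}, Or.inl (by simp), ?_, ?_⟩
    · rcases eq_or_ne (τ \ {v}) ∅ with h | h
      · right; exact h
      · left
        refine ⟨hK.2 τ hτ _ Finset.sdiff_subset (Finset.nonempty_iff_ne_empty.2 h), ?_, ?_⟩
        · rwa [Finset.sdiff_union_self_eq_union, Finset.union_eq_left.2 (by simpa using hv)]
        · simp
    · rw [Finset.union_comm, Finset.sdiff_union_self_eq_union,
        Finset.union_eq_left.2 (by simpa using hv)]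
  · right
    exact ⟨hK.1 τ hτ, ∅, τ, Or.inr rfl, Or.inl ⟨hτ, hv⟩, by simp⟩

lemma link_link {M : Set (Finset A)} (hM : IsSimpComplex M) {σ τ : Finset A}
    (hdisj : σ ∩ τ = ∅) :
    linkOf M (σ ∪ τ) = linkOf (linkOf M τ) σ := by
  ext ρ
  simp only [linkOf, Set.mem_setOf_eq]
  constructor
  · rintro ⟨h1, h2, h3⟩
    have hρσ : ρ ∩ σ = ∅ := by
      have : ρ ∩ σ ⊆ ρ ∩ (σ ∪ τ) := Finset.inter_subset_inter le_rfl Finset.subset_union_left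
      rw [h3] at this; exact Finset.subset_empty.1 this
    have hρτ : ρ ∩ τ = ∅ := by
      have : ρ ∩ τ ⊆ ρ ∩ (σ ∪ τ) := Finset.inter_subset_inter le_rfl Finset.subset_union_right
      rw [h3] at this; exact Finset.subset_empty.1 this
    have hρne : ρ.Nonempty := hM.1 ρ h1
    refine ⟨⟨h1, ?_, hρτ⟩, ⟨?_, ?_, ?_⟩, hρσ⟩
    · exact hM.2 _ h2 _ (by intro x; simp; tauto) (hρne.mono Finset.subset_union_left)
    · exact hM.2 _ h2 _ (by intro x; simp; tauto) (hρne.mono Finset.subset_union_left)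
    · rw [Finset.union_assoc]; exact h2
    · rw [Finset.union_inter_distrib_right, hρτ, hdisj]; simp
  · rintro ⟨⟨h1, h2, h3⟩, ⟨h4, h5, h6⟩, h7⟩
    refine ⟨h1, by rwa [Finset.union_assoc] at h5, ?_⟩
    rw [Finset.inter_union_distrib_left, h7, h3]; simp


lemma wed_vertices {K : Set (Finset A)} {V : Set A} (hKV : ∀ σ ∈ K, ∀ x ∈ σ, x ∈ V)
    {v : A} (hv : v ∈ V) (v' : A) :
    ∀ σ ∈ wed K v v', ∀ x ∈ σ, x ∈ V ∪ {v'} := by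
  rintro σ (⟨_, a, ρ, ha, hρ, rfl⟩ | ⟨_, a, ρ, ha, hρ, rfl⟩) x hx <;>
    simp only [Set.mem_insert_iff, Set.mem_singleton_iff] at ha <;>
    rcases Finset.mem_union.1 hx with hxa | hxρ
  · have hxvv : x ∈ ({v, v'} : Finset A) := by
      rcases ha with (rfl | rfl | rfl) | rfl
      · simp only [Finset.mem_singleton] at hxa; simp [hxa]
      · simp only [Finset.mem_singleton] at hxa; simp [hxa]
      · exact hxa
      · simp at hxa
    rcases Finset.mem_insert.1 hxvv with rfl | h
    · exact Or.inl hv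
    · simp only [Finset.mem_singleton] at h; subst h; exact Or.inr rfl
  · rcases hρ with hρ | rfl
    · exact Or.inl (hKV _ hρ.1 x hxρ)
    · simp at hxρ
  · have hxvv : x ∈ ({v, v'} : Finset A) := by
      rcases ha with (rfl | rfl) | rfl
      · simp only [Finset.mem_singleton] at hxa; simp [hxa]
      · simp only [Finset.mem_singleton] at hxa; simp [hxa]
      · simp at hxa
    rcases Finset.mem_insert.1 hxvv with rfl | h
    · exact Or.inl hv
    · simp only [Finset.mem_singleton] at h; subst h; exact Or.inr rfl
  · rcases hρ with hρ | rfl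
    · exact Or.inl (hKV _ hρ.1 x hxρ)
    · simp at hxρ

lemma link_wed {K : Set (Finset A)} (hK : IsSimpComplex K) {v v' : A}
    (hv : ({v} : Finset A) ∈ K) (hv' : ∀ τ ∈ K, v' ∉ τ) (hvv : v ≠ v') :
    linkOf (wed K v v') {v'} = K := by
  ext τ
  simp only [linkOf, Set.mem_setOf_eq]
  constructor
  · rintro ⟨hτw, hτv', hdisj⟩
    have hv'τ : v' ∉ τ := by
      intro h
      have : v' ∈ τ ∩ {v'} := by simp [h]
      rw [hdisj] at this; simp at this
    have hτne : τ.Nonempty := (wed_isSimpComplex hK v v').1 τ hτw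
    have hmem : ∀ ρ : Finset A, ρ ∈ K ∨ ρ = ∅ → v' ∉ ρ := by
      rintro ρ (h | rfl) hx
      · exact hv' ρ h hx
      · simp at hx
    rcases hτv' with ⟨_, σ, ρ, hσ, hρ, heq⟩ | ⟨_, σ, ρ, hσ, hρ, heq⟩ <;>
      simp only [Set.mem_insert_iff, Set.mem_singleton_iff] at hσ
    · have hρK : ρ ∈ K ∨ ρ = ∅ := by
        rcases hρ with h | h
        · exact Or.inl h.1
        · exact Or.inr h
      have hv'ρ : v' ∉ ρ := hmem ρ hρK
      have hv'σ : v' ∈ σ := by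
        have : v' ∈ σ ∪ ρ := heq ▸ (by simp)
        rcases Finset.mem_union.1 this with h | h
        · exact h
        · exact absurd h hv'ρ
      rcases hσ with (rfl | rfl | rfl) | rfl
      · simp only [Finset.mem_singleton] at hv'σ; exact absurd hv'σ.symm hvv
      · -- σ = {v'} : τ = ρ
        have hτρ : τ = ρ := by
          ext x
          constructor
          · intro hx
            have : x ∈ {v'} ∪ ρ := heq ▸ (Finset.mem_union_left _ hx)
            rcases Finset.mem_union.1 this with h | h
            · simp only [Finset.mem_singleton] at h; subst h; exact absurd hx hv'τ
            · exact h
          · intro hx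
            have : x ∈ τ ∪ {v'} := heq.symm ▸ (Finset.mem_union_right _ hx)
            rcases Finset.mem_union.1 this with h | h
            · exact h
            · simp only [Finset.mem_singleton] at h; subst h; exact absurd hx hv'ρ
        rcases hρK with h | h
        · exact hτρ ▸ h
        · exact absurd (hτρ ▸ h) (Finset.nonempty_iff_ne_empty.1 hτne)
      · -- σ = {v, v'} : τ = {v} ∪ ρ
        have hτρ : τ = {v} ∪ ρ := by
          ext x
          constructor
          · intro hx
            have : x ∈ {v, v'} ∪ ρ := heq ▸ (Finset.mem_union_left _ hx)
            simp only [Finset.mem_union, Finset.mem_insert, Finset.mem_singleton] at this ⊢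
            rcases this with (rfl | rfl) | h
            · exact Or.inl rfl
            · exact absurd hx hv'τ
            · exact Or.inr h
          · intro hx
            have hx' : x ∈ τ ∪ {v'} := by
              rw [heq]
              simp only [Finset.mem_union, Finset.mem_insert, Finset.mem_singleton] at hx ⊢
              tauto
            rcases Finset.mem_union.1 hx' with h | h
            · exact h
            · simp only [Finset.mem_singleton] at h; subst h
              simp only [Finset.mem_union, Finset.mem_singleton] at hx
              rcases hx with h | h
              · exact absurd h.symm hvv
              · exact absurd h hv'ρ
        rcases hρ with h | rfl
        · rw [hτρ, Finset.union_comm]; exact h.2.1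
        · rw [hτρ]; simpa using hv
      · exact absurd hv'σ (by simp)
    · have hρK : ρ ∈ K ∨ ρ = ∅ := by
        rcases hρ with h | h
        · exact Or.inl h.1
        · exact Or.inr h
      have hv'ρ : v' ∉ ρ := hmem ρ hρK
      have hv'σ : v' ∈ σ := by
        have : v' ∈ σ ∪ ρ := heq ▸ (by simp)
        rcases Finset.mem_union.1 this with h | h
        · exact h
        · exact absurd h hv'ρ
      rcases hσ with (rfl | rfl) | rfl
      · simp only [Finset.mem_singleton] at hv'σ; exact absurd hv'σ.symm hvv
      · have hτρ : τ = ρ := by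
          ext x
          constructor
          · intro hx
            have : x ∈ {v'} ∪ ρ := heq ▸ (Finset.mem_union_left _ hx)
            rcases Finset.mem_union.1 this with h | h
            · simp only [Finset.mem_singleton] at h; subst h; exact absurd hx hv'τ
            · exact h
          · intro hx
            have : x ∈ τ ∪ {v'} := heq.symm ▸ (Finset.mem_union_right _ hx)
            rcases Finset.mem_union.1 this with h | h
            · exact h
            · simp only [Finset.mem_singleton] at h; subst h; exact absurd hx hv'ρ
        rcases hρK with h | h
        · exact hτρ ▸ h
        · exact absurd (hτρ ▸ h) (Finset.nonempty_iff_ne_empty.1 hτne)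
      · exact absurd hv'σ (by simp)
  · intro hτ
    have hv'τ : v' ∉ τ := hv' τ hτ
    refine ⟨subset_wed hK v v' hτ, ?_, by simp [Finset.inter_singleton_of_notMem hv'τ]⟩
    by_cases hvτ : v ∈ τ
    · left
      refine ⟨⟨v, Finset.mem_union_left _ hvτ⟩, {v, v'}, τ \ {v}, Or.inl (by simp), ?_, ?_⟩
      · rcases eq_or_ne (τ \ {v}) ∅ with h | h
        · right; exact h
        · left
          refine ⟨hK.2 τ hτ _ Finset.sdiff_subset (Finset.nonempty_iff_ne_empty.2 h), ?_, by simp⟩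
          rw [Finset.sdiff_union_self_eq_union, Finset.union_eq_left.2 (by simpa using hvτ)]
          exact hτ
      · ext x
        simp only [Finset.mem_union, Finset.mem_insert, Finset.mem_singleton, Finset.mem_sdiff]
        constructor
        · rintro (hx | rfl)
          · by_cases hxv : x = v
            · exact Or.inl (Or.inl hxv)
            · exact Or.inr ⟨hx, hxv⟩
          · exact Or.inl (Or.inr rfl)
        · rintro ((rfl | rfl) | ⟨hx, _⟩)
          · exact Or.inl hvτ
          · exact Or.inr rfl
          · exact Or.inl hx
    · right
      exact ⟨⟨v', Finset.mem_union_right _ (by simp)⟩, {v'}, τ, Or.inl (by simp),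
        Or.inl ⟨hτ, hvτ⟩, by rw [Finset.union_comm]⟩
end Stmt11Aux


open Stmt11Aux in
theorem stmt11 (m : ℕ) (K : Set (Finset (ℕ × ℕ)))
    (hK : IsSimpComplex K)
    (hKV : OnVertexSet K {p : ℕ × ℕ | p.1 ∈ Finset.Icc 1 m ∧ p.2 = 0})
    (hvert : ∀ v ∈ Finset.Icc 1 m, ({(v, 0)} : Finset (ℕ × ℕ)) ∈ K)
    (j : ℕ → ℕ) (hj1 : ∀ v ∈ Finset.Icc 1 m, 1 ≤ j v)
    (hj2 : ∀ v ∈ Finset.Icc 1 m, j v ≤ 2)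
    (hne : ∃ v ∈ Finset.Icc 1 m, j v = 2) :
    linkOf (KJ K m j)
        (((Finset.Icc 1 m).filter fun v => j v = 2).image fun v => ((v, 1) : ℕ × ℕ)) =
      K := by
  clear hne
  set f : Set (Finset (ℕ × ℕ)) → ℕ → Set (Finset (ℕ × ℕ)) :=
    fun L v => wedIter L (v + 1) (j (v + 1) - 1) with hf
  set Ln : ℕ → Set (Finset (ℕ × ℕ)) := fun n => (List.range n).foldl f K with hLn
  set W : ℕ → Set (ℕ × ℕ) :=
    fun n => {p : ℕ × ℕ | p.1 ∈ Finset.Icc 1 m ∧ p.2 = 0} ∪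
      {p : ℕ × ℕ | p.2 = 1 ∧ p.1 ∈ Finset.Icc 1 n} with hW
  set S : ℕ → Finset (ℕ × ℕ) :=
    fun n => ((Finset.Icc 1 n).filter fun v => j v = 2).image fun v => ((v, 1) : ℕ × ℕ)
    with hS
  have key : ∀ n, n ≤ m → IsSimpComplex (Ln n) ∧ (∀ σ ∈ Ln n, ∀ x ∈ σ, x ∈ W n) ∧
      (∀ v ∈ Finset.Icc 1 m, ({(v, 0)} : Finset (ℕ × ℕ)) ∈ Ln n) ∧
      linkOf (Ln n) (S n) = K := by
    intro n
    induction n with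
    | zero =>
      intro _
      refine ⟨hK, fun σ hσ x hx => Or.inl (hKV σ hσ x hx), hvert, ?_⟩
      have h0 : S 0 = ∅ := by simp [hS]
      have hL0 : Ln 0 = K := by simp [hLn]
      rw [h0, linkOf_empty, hL0]
    | succ n ih =>
      intro hnm
      obtain ⟨h1, h2, h3, h4⟩ := ih (Nat.le_of_succ_le hnm)
      have hstep : Ln (n + 1) = f (Ln n) n := by
        simp only [hLn, List.range_succ, List.foldl_append, List.foldl_cons, List.foldl_nil]
      have hIcc : Finset.Icc 1 (n + 1) = insert (n + 1) (Finset.Icc 1 n) := by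
        ext x; simp only [Finset.mem_Icc, Finset.mem_insert]; omega
      have hmemIcc : n + 1 ∈ Finset.Icc 1 m := by
        exact Finset.mem_Icc.2 ⟨by omega, hnm⟩
      have hjcases : j (n + 1) = 1 ∨ j (n + 1) = 2 := by
        have := hj1 _ hmemIcc; have := hj2 _ hmemIcc; omega
      have hWmono : W n ⊆ W (n + 1) := by
        rintro p (hp | ⟨hp1, hp2⟩)
        · exact Or.inl hp
        · rw [Finset.mem_Icc] at hp2
          exact Or.inr ⟨hp1, Finset.mem_Icc.2 ⟨hp2.1, by omega⟩⟩
      rcases hjcases with hj | hj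
      · -- no wedge this step
        have hLeq : Ln (n + 1) = Ln n := by
          rw [hstep, hf]; simp only [hj]; rfl
        have hSeq : S (n + 1) = S n := by
          simp only [hS, hIcc, Finset.filter_insert, hj]
          norm_num
        rw [hLeq, hSeq]
        exact ⟨h1, fun σ hσ x hx => hWmono (h2 σ hσ x hx), h3, h4⟩
      · -- wedge at (n+1, 0) introducing (n+1, 1)
        have hLeq : Ln (n + 1) = wed (Ln n) (n + 1, 0) (n + 1, 1) := by
          rw [hstep, hf]; simp only [hj]; rfl
        have hv0 : ((n + 1, 0) : ℕ × ℕ) ∈ W n := Or.inl ⟨hmemIcc, rfl⟩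
        have hfresh : ((n + 1, 1) : ℕ × ℕ) ∉ W n := by
          rintro (hp | hp)
          · exact absurd hp.2 one_ne_zero
          · simp only [Set.mem_setOf_eq, Finset.mem_Icc] at hp; omega
        have hv'new : ∀ τ ∈ Ln n, ((n + 1, 1) : ℕ × ℕ) ∉ τ :=
          fun τ hτ h => hfresh (h2 τ hτ _ h)
        have hSC : IsSimpComplex (Ln (n + 1)) := hLeq ▸ wed_isSimpComplex h1 _ _
        have hV : ∀ σ ∈ Ln (n + 1), ∀ x ∈ σ, x ∈ W (n + 1) := by
          rw [hLeq]
          intro σ hσ x hx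
          rcases wed_vertices h2 hv0 ((n + 1, 1) : ℕ × ℕ) σ hσ x hx with h | h
          · exact hWmono h
          · rw [h]; right; exact ⟨rfl, by simp⟩
        have hvert' : ∀ v ∈ Finset.Icc 1 m, ({(v, 0)} : Finset (ℕ × ℕ)) ∈ Ln (n + 1) := by
          intro v hv
          rw [hLeq]
          exact subset_wed h1 _ _ (h3 v hv)
        refine ⟨hSC, hV, hvert', ?_⟩
        have hSeq : S (n + 1) = S n ∪ {((n + 1, 1) : ℕ × ℕ)} := by
          simp only [hS, hIcc, Finset.filter_insert, if_pos hj, Finset.image_insert]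
          rw [Finset.insert_eq, Finset.union_comm]
        have hSdisj : S n ∩ {((n + 1, 1) : ℕ × ℕ)} = ∅ := by
          rw [Finset.eq_empty_iff_forall_notMem]
          intro p hp
          rcases Finset.mem_inter.1 hp with ⟨hp1, hp2⟩
          simp only [Finset.mem_singleton] at hp2
          subst hp2
          simp only [hS, Finset.mem_image, Finset.mem_filter, Finset.mem_Icc] at hp1
          obtain ⟨v, ⟨hv, _⟩, hveq⟩ := hp1
          have : v = n + 1 := by exact congrArg Prod.fst hveq
          omega
        rw [hSeq, link_link hSC hSdisj, hLeq,
          link_wed h1 (h3 _ hmemIcc) hv'new (by simp)]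
        exact h4
  have := (key m le_rfl).2.2.2
  exact this
end
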